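/- arXiv:2206.13868 — 14 statements merged into one kernel-verified Lean document; each statement's English description precedes it below -/
import Mathlib

section
/- Along any solution (X, P) of the extremal system with continuous control u, the switching function Φ is twice differentiable and satisfies Φ̈(t) = −Δ² Φ(t) + Δ u(t) (x1(t) p2(t) − x2(t) p1(t)) − Δ x1(t) x3(t) for every t. -/
open Set

theorem HasDerivAt.mul_sub_mul {𝕜 𝔸 : Type*} [NontriviallyNormedField 𝕜] [NormedRing 𝔸]
    [NormedAlgebra 𝕜 𝔸] {f g h k : 𝕜 → 𝔸} {f' g' h' k' : 𝔸} {t : 𝕜}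
    (hf : HasDerivAt f f' t) (hg : HasDerivAt g g' t)
    (hh : HasDerivAt h h' t) (hk : HasDerivAt k k' t) :
    HasDerivAt (fun s => f s * g s - h s * k s)
      (f' * g t + f t * g' - (h' * k t + h t * k')) t :=
  (hf.mul hg).sub (hh.mul hk)

theorem switching_function_second_deriv_general
    (Δ : ℝ) (a b : ℝ)
    (u x1 x2 x3 p1 p2 p3 : ℝ → ℝ)
    (hx1 : ∀ t ∈ Ioo a b, HasDerivAt x1 (-Δ * x2 t) t)
    (hx2 : ∀ t ∈ Ioo a b, HasDerivAt x2 (Δ * x1 t - u t * x3 t) t)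
    (hx3 : ∀ t ∈ Ioo a b, HasDerivAt x3 (u t * x2 t) t)
    (hp1 : ∀ t ∈ Ioo a b, HasDerivAt p1 (-Δ * p2 t + x1 t) t)
    (hp2 : ∀ t ∈ Ioo a b, HasDerivAt p2 (Δ * p1 t - u t * p3 t) t)
    (hp3 : ∀ t ∈ Ioo a b, HasDerivAt p3 (u t * p2 t) t) :
    (∀ t ∈ Ioo a b,
      HasDerivAt (fun s => p3 s * x2 s - p2 s * x3 s)
        (Δ * (x1 t * p3 t - x3 t * p1 t)) t) ∧
    (∀ t ∈ Ioo a b,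
      HasDerivAt (fun s => Δ * (x1 s * p3 s - x3 s * p1 s))
        (-Δ ^ 2 * (p3 t * x2 t - p2 t * x3 t)
          + Δ * u t * (x1 t * p2 t - x2 t * p1 t) - Δ * x1 t * x3 t) t) := by
  refine ⟨fun t ht => ?_, fun t ht => ?_⟩
  · exact ((hp3 t ht).mul_sub_mul (hx2 t ht) (hp2 t ht) (hx3 t ht)).congr_deriv (by ring)
  · exact (((hx1 t ht).mul_sub_mul (hp3 t ht) (hx3 t ht) (hp1 t ht)).const_mul Δ).congr_deriv
      (by ring)

/-- Along any solution (X, P) of the extremal system with continuous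
control u, the switching function Φ = p3 x2 − p2 x3 is twice differentiable with
Φ̇ = Δ (x1 p3 − x3 p1) and
Φ̈(t) = −Δ² Φ(t) + Δ u(t) (x1 p2 − x2 p1)(t) − Δ x1(t) x3(t). -/
theorem switching_function_second_deriv
    (Δ : ℝ) (hΔ : Δ ≠ 0) (a b : ℝ) (hab : a < b)
    (u x1 x2 x3 p1 p2 p3 : ℝ → ℝ)
    (hu : ContinuousOn u (Ioo a b))
    (hx1 : ∀ t ∈ Ioo a b, HasDerivAt x1 (-Δ * x2 t) t)
    (hx2 : ∀ t ∈ Ioo a b, HasDerivAt x2 (Δ * x1 t - u t * x3 t) t)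
    (hx3 : ∀ t ∈ Ioo a b, HasDerivAt x3 (u t * x2 t) t)
    (hp1 : ∀ t ∈ Ioo a b, HasDerivAt p1 (-Δ * p2 t + x1 t) t)
    (hp2 : ∀ t ∈ Ioo a b, HasDerivAt p2 (Δ * p1 t - u t * p3 t) t)
    (hp3 : ∀ t ∈ Ioo a b, HasDerivAt p3 (u t * p2 t) t) :
    (∀ t ∈ Ioo a b,
      HasDerivAt (fun s => p3 s * x2 s - p2 s * x3 s)
        (Δ * (x1 t * p3 t - x3 t * p1 t)) t) ∧
    (∀ t ∈ Ioo a b,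
      HasDerivAt (fun s => Δ * (x1 s * p3 s - x3 s * p1 s))
        (-Δ ^ 2 * (p3 t * x2 t - p2 t * x3 t)
          + Δ * u t * (x1 t * p2 t - x2 t * p1 t) - Δ * x1 t * x3 t) t) :=
  switching_function_second_deriv_general Δ a b u x1 x2 x3 p1 p2 p3 hx1 hx2 hx3 hp1 hp2 hp3
end

section
/- Along any solution (X, P) of the extremal system whose control u is constant and equal to +1 or to −1 on an interval (a bang arc), the switching function Φ is three times differentiable there and its third derivative satisfies Φ⁽³⁾(t) = −(Δ² + 1) Φ̇(t) − 2 Δ u x1(t) x2(t) + Δ² x2(t) x3(t). -/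
open Set

/-!
Each identity is the product rule followed by substitution of the extremal system; the
control enters the third derivative only through `c ^ 2`, which is `1` on a bang arc.
-/

structure IsConstControlExtremalAt (Δ c : ℝ) (x1 x2 x3 p1 p2 p3 : ℝ → ℝ) (t : ℝ) : Prop where
  hx1 : HasDerivAt x1 (-Δ * x2 t) t
  hx2 : HasDerivAt x2 (Δ * x1 t - c * x3 t) t
  hx3 : HasDerivAt x3 (c * x2 t) t
  hp1 : HasDerivAt p1 (-Δ * p2 t + x1 t) t
  hp2 : HasDerivAt p2 (Δ * p1 t - c * p3 t) t
  hp3 : HasDerivAt p3 (c * p2 t) t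

namespace IsConstControlExtremalAt

variable {Δ c t : ℝ} {x1 x2 x3 p1 p2 p3 : ℝ → ℝ}

theorem hasDerivAt_switching (h : IsConstControlExtremalAt Δ c x1 x2 x3 p1 p2 p3 t) :
    HasDerivAt (fun s => p3 s * x2 s - p2 s * x3 s) (Δ * (x1 t * p3 t - x3 t * p1 t)) t :=
  ((h.hp3.mul h.hx2).sub (h.hp2.mul h.hx3)).congr_deriv (by ring)

theorem hasDerivAt_switching_deriv (h : IsConstControlExtremalAt Δ c x1 x2 x3 p1 p2 p3 t) :
    HasDerivAt (fun s => Δ * (x1 s * p3 s - x3 s * p1 s))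
      (-Δ ^ 2 * (p3 t * x2 t - p2 t * x3 t)
        + Δ * c * (x1 t * p2 t - x2 t * p1 t) - Δ * x1 t * x3 t) t :=
  (((h.hx1.mul h.hp3).sub (h.hx3.mul h.hp1)).const_mul Δ).congr_deriv (by ring)

theorem hasDerivAt_switching_second_deriv
    (h : IsConstControlExtremalAt Δ c x1 x2 x3 p1 p2 p3 t) :
    HasDerivAt (fun s => -Δ ^ 2 * (p3 s * x2 s - p2 s * x3 s)
        + Δ * c * (x1 s * p2 s - x2 s * p1 s) - Δ * x1 s * x3 s)
      (-(Δ ^ 2 + c ^ 2) * (Δ * (x1 t * p3 t - x3 t * p1 t))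
        - 2 * Δ * c * x1 t * x2 t + Δ ^ 2 * x2 t * x3 t) t := by
  have hcross : HasDerivAt (fun s => x1 s * p2 s - x2 s * p1 s)
      (-c * (x1 t * p3 t - x3 t * p1 t) - x1 t * x2 t) t :=
    ((h.hx1.mul h.hp2).sub (h.hx2.mul h.hp1)).congr_deriv (by ring)
  refine (((h.hasDerivAt_switching.const_mul (-Δ ^ 2)).add (hcross.const_mul (Δ * c))).sub
    ((h.hx1.const_mul Δ).mul h.hx3)).congr_deriv ?_
  ring

end IsConstControlExtremalAt

theorem switching_function_third_deriv_bang_general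
    (Δ : ℝ) (a b : ℝ)
    (c : ℝ) (hc : c = 1 ∨ c = -1)
    (x1 x2 x3 p1 p2 p3 : ℝ → ℝ)
    (hx1 : ∀ t ∈ Ioo a b, HasDerivAt x1 (-Δ * x2 t) t)
    (hx2 : ∀ t ∈ Ioo a b, HasDerivAt x2 (Δ * x1 t - c * x3 t) t)
    (hx3 : ∀ t ∈ Ioo a b, HasDerivAt x3 (c * x2 t) t)
    (hp1 : ∀ t ∈ Ioo a b, HasDerivAt p1 (-Δ * p2 t + x1 t) t)
    (hp2 : ∀ t ∈ Ioo a b, HasDerivAt p2 (Δ * p1 t - c * p3 t) t)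
    (hp3 : ∀ t ∈ Ioo a b, HasDerivAt p3 (c * p2 t) t) :
    (∀ t ∈ Ioo a b,
      HasDerivAt (fun s => p3 s * x2 s - p2 s * x3 s)
        (Δ * (x1 t * p3 t - x3 t * p1 t)) t) ∧
    (∀ t ∈ Ioo a b,
      HasDerivAt (fun s => Δ * (x1 s * p3 s - x3 s * p1 s))
        (-Δ ^ 2 * (p3 t * x2 t - p2 t * x3 t)
          + Δ * c * (x1 t * p2 t - x2 t * p1 t) - Δ * x1 t * x3 t) t) ∧
    (∀ t ∈ Ioo a b,
      HasDerivAt (fun s => -Δ ^ 2 * (p3 s * x2 s - p2 s * x3 s)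
          + Δ * c * (x1 s * p2 s - x2 s * p1 s) - Δ * x1 s * x3 s)
        (-(Δ ^ 2 + 1) * (Δ * (x1 t * p3 t - x3 t * p1 t))
          - 2 * Δ * c * x1 t * x2 t + Δ ^ 2 * x2 t * x3 t) t) := by
  have extremal : ∀ t ∈ Ioo a b, IsConstControlExtremalAt Δ c x1 x2 x3 p1 p2 p3 t :=
    fun t ht => ⟨hx1 t ht, hx2 t ht, hx3 t ht, hp1 t ht, hp2 t ht, hp3 t ht⟩
  have hc2 : c ^ 2 = 1 := by rcases hc with rfl | rfl <;> norm_num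
  refine ⟨fun t ht => (extremal t ht).hasDerivAt_switching,
    fun t ht => (extremal t ht).hasDerivAt_switching_deriv, fun t ht => ?_⟩
  simpa only [hc2] using (extremal t ht).hasDerivAt_switching_second_deriv

/-- On a bang arc (control constantly c = +1 or c = −1), the switching
function Φ = p3 x2 − p2 x3 is three times differentiable, with
Φ̇ = Δ (x1 p3 − x3 p1),
Φ̈ = −Δ² Φ + Δ c (x1 p2 − x2 p1) − Δ x1 x3, and
Φ⁽³⁾(t) = −(Δ² + 1) Φ̇(t) − 2 Δ c x1(t) x2(t) + Δ² x2(t) x3(t). -/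
theorem switching_function_third_deriv_bang
    (Δ : ℝ) (hΔ : Δ ≠ 0) (a b : ℝ) (hab : a < b)
    (c : ℝ) (hc : c = 1 ∨ c = -1)
    (x1 x2 x3 p1 p2 p3 : ℝ → ℝ)
    (hx1 : ∀ t ∈ Ioo a b, HasDerivAt x1 (-Δ * x2 t) t)
    (hx2 : ∀ t ∈ Ioo a b, HasDerivAt x2 (Δ * x1 t - c * x3 t) t)
    (hx3 : ∀ t ∈ Ioo a b, HasDerivAt x3 (c * x2 t) t)
    (hp1 : ∀ t ∈ Ioo a b, HasDerivAt p1 (-Δ * p2 t + x1 t) t)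
    (hp2 : ∀ t ∈ Ioo a b, HasDerivAt p2 (Δ * p1 t - c * p3 t) t)
    (hp3 : ∀ t ∈ Ioo a b, HasDerivAt p3 (c * p2 t) t) :
    (∀ t ∈ Ioo a b,
      HasDerivAt (fun s => p3 s * x2 s - p2 s * x3 s)
        (Δ * (x1 t * p3 t - x3 t * p1 t)) t) ∧
    (∀ t ∈ Ioo a b,
      HasDerivAt (fun s => Δ * (x1 s * p3 s - x3 s * p1 s))
        (-Δ ^ 2 * (p3 t * x2 t - p2 t * x3 t)
          + Δ * c * (x1 t * p2 t - x2 t * p1 t) - Δ * x1 t * x3 t) t) ∧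
    (∀ t ∈ Ioo a b,
      HasDerivAt (fun s => -Δ ^ 2 * (p3 s * x2 s - p2 s * x3 s)
          + Δ * c * (x1 s * p2 s - x2 s * p1 s) - Δ * x1 s * x3 s)
        (-(Δ ^ 2 + 1) * (Δ * (x1 t * p3 t - x3 t * p1 t))
          - 2 * Δ * c * x1 t * x2 t + Δ ^ 2 * x2 t * x3 t) t) :=
  switching_function_third_deriv_bang_general Δ a b c hc x1 x2 x3 p1 p2 p3 hx1 hx2 hx3 hp1 hp2 hp3
end

section
/- Along any solution (X, P) of the extremal system whose control u is constant and equal to +1 or to −1 on an interval (a bang arc), the switching function Φ is four times differentiable there and its fourth derivative satisfies Φ⁽⁴⁾(t) = −(Δ² + 1) Φ̈(t) + Δ (Δ² + 2) x1(t) x3(t) + Δ² u (3 x2(t)² − 2 x1(t)² − x3(t)²). -/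
/-!
Each derivative follows from the product rule after substituting the extremal system.
From the second derivative on, differentiating the terms carrying the control `c` produces
`c ^ 2`, and these collapse to constants exactly because the control is bang: `c ^ 2 = 1`.
-/

open Set

structure IsBangExtremalAt (Δ c : ℝ) (x1 x2 x3 p1 p2 p3 : ℝ → ℝ) (t : ℝ) : Prop where
  hasDerivAt_x1 : HasDerivAt x1 (-Δ * x2 t) t
  hasDerivAt_x2 : HasDerivAt x2 (Δ * x1 t - c * x3 t) t
  hasDerivAt_x3 : HasDerivAt x3 (c * x2 t) t
  hasDerivAt_p1 : HasDerivAt p1 (-Δ * p2 t + x1 t) t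
  hasDerivAt_p2 : HasDerivAt p2 (Δ * p1 t - c * p3 t) t
  hasDerivAt_p3 : HasDerivAt p3 (c * p2 t) t

namespace IsBangExtremalAt

variable {Δ c t : ℝ} {x1 x2 x3 p1 p2 p3 : ℝ → ℝ}

theorem hasDerivAt_switching (h : IsBangExtremalAt Δ c x1 x2 x3 p1 p2 p3 t) :
    HasDerivAt (fun s => p3 s * x2 s - p2 s * x3 s) (Δ * (x1 t * p3 t - x3 t * p1 t)) t :=
  ((h.hasDerivAt_p3.mul h.hasDerivAt_x2).sub (h.hasDerivAt_p2.mul h.hasDerivAt_x3)).congr_deriv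
    (by ring)

theorem hasDerivAt_switching_deriv (h : IsBangExtremalAt Δ c x1 x2 x3 p1 p2 p3 t) :
    HasDerivAt (fun s => Δ * (x1 s * p3 s - x3 s * p1 s))
      (-Δ ^ 2 * (p3 t * x2 t - p2 t * x3 t)
        + Δ * c * (x1 t * p2 t - x2 t * p1 t) - Δ * x1 t * x3 t) t :=
  (((h.hasDerivAt_x1.mul h.hasDerivAt_p3).sub (h.hasDerivAt_x3.mul h.hasDerivAt_p1)).const_mul
    Δ).congr_deriv (by ring)

theorem hasDerivAt_switching_deriv2 (h : IsBangExtremalAt Δ c x1 x2 x3 p1 p2 p3 t)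
    (hc : c ^ 2 = 1) :
    HasDerivAt (fun s => -Δ ^ 2 * (p3 s * x2 s - p2 s * x3 s)
        + Δ * c * (x1 s * p2 s - x2 s * p1 s) - Δ * x1 s * x3 s)
      (-(Δ ^ 2 + 1) * (Δ * (x1 t * p3 t - x3 t * p1 t))
        - 2 * Δ * c * x1 t * x2 t + Δ ^ 2 * x2 t * x3 t) t := by
  have hΦ := h.hasDerivAt_switching.const_mul (-Δ ^ 2)
  have hΨ := ((h.hasDerivAt_x1.mul h.hasDerivAt_p2).sub
    (h.hasDerivAt_x2.mul h.hasDerivAt_p1)).const_mul (Δ * c)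
  have hx13 := (h.hasDerivAt_x1.const_mul Δ).mul h.hasDerivAt_x3
  refine ((hΦ.add hΨ).sub hx13).congr_deriv ?_
  linear_combination (-Δ) * (x1 t * p3 t - x3 t * p1 t) * hc

theorem hasDerivAt_switching_deriv3 (h : IsBangExtremalAt Δ c x1 x2 x3 p1 p2 p3 t)
    (hc : c ^ 2 = 1) :
    HasDerivAt (fun s => -(Δ ^ 2 + 1) * (Δ * (x1 s * p3 s - x3 s * p1 s))
        - 2 * Δ * c * x1 s * x2 s + Δ ^ 2 * x2 s * x3 s)
      (-(Δ ^ 2 + 1) * (-Δ ^ 2 * (p3 t * x2 t - p2 t * x3 t)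
          + Δ * c * (x1 t * p2 t - x2 t * p1 t) - Δ * x1 t * x3 t)
        + Δ * (Δ ^ 2 + 2) * x1 t * x3 t
        + Δ ^ 2 * c * (3 * x2 t ^ 2 - 2 * x1 t ^ 2 - x3 t ^ 2)) t := by
  have hΦ' := h.hasDerivAt_switching_deriv.const_mul (-(Δ ^ 2 + 1))
  have hx12 := (h.hasDerivAt_x1.const_mul (2 * Δ * c)).mul h.hasDerivAt_x2
  have hx23 := (h.hasDerivAt_x2.const_mul (Δ ^ 2)).mul h.hasDerivAt_x3
  refine ((hΦ'.sub hx12).add hx23).congr_deriv ?_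
  linear_combination 2 * Δ * x1 t * x3 t * hc

end IsBangExtremalAt

theorem switching_function_fourth_deriv_bang_general
    (Δ : ℝ) (a b : ℝ)
    (c : ℝ) (hc : c = 1 ∨ c = -1)
    (x1 x2 x3 p1 p2 p3 : ℝ → ℝ)
    (hx1 : ∀ t ∈ Ioo a b, HasDerivAt x1 (-Δ * x2 t) t)
    (hx2 : ∀ t ∈ Ioo a b, HasDerivAt x2 (Δ * x1 t - c * x3 t) t)
    (hx3 : ∀ t ∈ Ioo a b, HasDerivAt x3 (c * x2 t) t)
    (hp1 : ∀ t ∈ Ioo a b, HasDerivAt p1 (-Δ * p2 t + x1 t) t)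
    (hp2 : ∀ t ∈ Ioo a b, HasDerivAt p2 (Δ * p1 t - c * p3 t) t)
    (hp3 : ∀ t ∈ Ioo a b, HasDerivAt p3 (c * p2 t) t) :
    (∀ t ∈ Ioo a b,
      HasDerivAt (fun s => p3 s * x2 s - p2 s * x3 s)
        (Δ * (x1 t * p3 t - x3 t * p1 t)) t) ∧
    (∀ t ∈ Ioo a b,
      HasDerivAt (fun s => Δ * (x1 s * p3 s - x3 s * p1 s))
        (-Δ ^ 2 * (p3 t * x2 t - p2 t * x3 t)
          + Δ * c * (x1 t * p2 t - x2 t * p1 t) - Δ * x1 t * x3 t) t) ∧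
    (∀ t ∈ Ioo a b,
      HasDerivAt (fun s => -Δ ^ 2 * (p3 s * x2 s - p2 s * x3 s)
          + Δ * c * (x1 s * p2 s - x2 s * p1 s) - Δ * x1 s * x3 s)
        (-(Δ ^ 2 + 1) * (Δ * (x1 t * p3 t - x3 t * p1 t))
          - 2 * Δ * c * x1 t * x2 t + Δ ^ 2 * x2 t * x3 t) t) ∧
    (∀ t ∈ Ioo a b,
      HasDerivAt (fun s => -(Δ ^ 2 + 1) * (Δ * (x1 s * p3 s - x3 s * p1 s))
          - 2 * Δ * c * x1 s * x2 s + Δ ^ 2 * x2 s * x3 s)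
        (-(Δ ^ 2 + 1) * (-Δ ^ 2 * (p3 t * x2 t - p2 t * x3 t)
            + Δ * c * (x1 t * p2 t - x2 t * p1 t) - Δ * x1 t * x3 t)
          + Δ * (Δ ^ 2 + 2) * x1 t * x3 t
          + Δ ^ 2 * c * (3 * x2 t ^ 2 - 2 * x1 t ^ 2 - x3 t ^ 2)) t) := by
  have hc2 : c ^ 2 = 1 := by rcases hc with rfl | rfl <;> norm_num
  have hext (t : ℝ) (ht : t ∈ Ioo a b) : IsBangExtremalAt Δ c x1 x2 x3 p1 p2 p3 t :=
    ⟨hx1 t ht, hx2 t ht, hx3 t ht, hp1 t ht, hp2 t ht, hp3 t ht⟩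
  exact ⟨fun t ht => (hext t ht).hasDerivAt_switching,
    fun t ht => (hext t ht).hasDerivAt_switching_deriv,
    fun t ht => (hext t ht).hasDerivAt_switching_deriv2 hc2,
    fun t ht => (hext t ht).hasDerivAt_switching_deriv3 hc2⟩

/-- On a bang arc (control constantly c = +1 or c = −1), the switching
function Φ = p3 x2 − p2 x3 is four times differentiable, with
Φ̇ = Δ (x1 p3 − x3 p1),
Φ̈ = −Δ² Φ + Δ c (x1 p2 − x2 p1) − Δ x1 x3,
Φ⁽³⁾ = −(Δ² + 1) Φ̇ − 2 Δ c x1 x2 + Δ² x2 x3, and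
Φ⁽⁴⁾(t) = −(Δ² + 1) Φ̈(t) + Δ (Δ² + 2) x1(t) x3(t) + Δ² c (3 x2(t)² − 2 x1(t)² − x3(t)²). -/
theorem switching_function_fourth_deriv_bang
    (Δ : ℝ) (hΔ : Δ ≠ 0) (a b : ℝ) (hab : a < b)
    (c : ℝ) (hc : c = 1 ∨ c = -1)
    (x1 x2 x3 p1 p2 p3 : ℝ → ℝ)
    (hx1 : ∀ t ∈ Ioo a b, HasDerivAt x1 (-Δ * x2 t) t)
    (hx2 : ∀ t ∈ Ioo a b, HasDerivAt x2 (Δ * x1 t - c * x3 t) t)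
    (hx3 : ∀ t ∈ Ioo a b, HasDerivAt x3 (c * x2 t) t)
    (hp1 : ∀ t ∈ Ioo a b, HasDerivAt p1 (-Δ * p2 t + x1 t) t)
    (hp2 : ∀ t ∈ Ioo a b, HasDerivAt p2 (Δ * p1 t - c * p3 t) t)
    (hp3 : ∀ t ∈ Ioo a b, HasDerivAt p3 (c * p2 t) t) :
    (∀ t ∈ Ioo a b,
      HasDerivAt (fun s => p3 s * x2 s - p2 s * x3 s)
        (Δ * (x1 t * p3 t - x3 t * p1 t)) t) ∧
    (∀ t ∈ Ioo a b,
      HasDerivAt (fun s => Δ * (x1 s * p3 s - x3 s * p1 s))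
        (-Δ ^ 2 * (p3 t * x2 t - p2 t * x3 t)
          + Δ * c * (x1 t * p2 t - x2 t * p1 t) - Δ * x1 t * x3 t) t) ∧
    (∀ t ∈ Ioo a b,
      HasDerivAt (fun s => -Δ ^ 2 * (p3 s * x2 s - p2 s * x3 s)
          + Δ * c * (x1 s * p2 s - x2 s * p1 s) - Δ * x1 s * x3 s)
        (-(Δ ^ 2 + 1) * (Δ * (x1 t * p3 t - x3 t * p1 t))
          - 2 * Δ * c * x1 t * x2 t + Δ ^ 2 * x2 t * x3 t) t) ∧
    (∀ t ∈ Ioo a b,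
      HasDerivAt (fun s => -(Δ ^ 2 + 1) * (Δ * (x1 s * p3 s - x3 s * p1 s))
          - 2 * Δ * c * x1 s * x2 s + Δ ^ 2 * x2 s * x3 s)
        (-(Δ ^ 2 + 1) * (-Δ ^ 2 * (p3 t * x2 t - p2 t * x3 t)
            + Δ * c * (x1 t * p2 t - x2 t * p1 t) - Δ * x1 t * x3 t)
          + Δ * (Δ ^ 2 + 2) * x1 t * x3 t
          + Δ ^ 2 * c * (3 * x2 t ^ 2 - 2 * x1 t ^ 2 - x3 t ^ 2)) t) :=
  switching_function_fourth_deriv_bang_general Δ a b c hc x1 x2 x3 p1 p2 p3 hx1 hx2 hx3 hp1 hp2 hp3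
end

section
/- Let (X, P) solve the extremal system on [T − ε, T] with control constantly equal to c ∈ {−1, +1}, and suppose X(T) = (0, 0, 1) and P(T) = λ (0, 0, 1) for some λ ∈ ℝ (i.e. the reduced adjoint P̃(T) vanishes). Then the switching function satisfies Φ(T) = Φ̇(T) = Φ̈(T) = Φ⁽³⁾(T) = 0 and Φ⁽⁴⁾(T) = −c Δ². -/
/-!
With `ω = (c, 0, Δ)` the extremal system reads `Ẋ = ω × X` and `Ṗ = ω × P + x1 e₁`. By the
Jacobi identity the cross product `M = X × P` obeys `Ṁ = ω × M + x1 (X × e₁)`, and `Φ = M₁`.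
Differentiating `Φ` four times expresses every derivative through `M` and `X`. At `T` we have
`M(T) = 0` because `P(T) ∥ X(T) = e₃`, so only the forcing term survives, and it contributes
`Φ⁽⁴⁾(T) = -c Δ²`.
-/

open Set

/-- `ẏ = ω × y + f` on `s`, with `ω = (c, 0, Δ)`. -/
structure IsForcedRotation (Δ c : ℝ) (s : Set ℝ) (y1 y2 y3 f1 f2 f3 : ℝ → ℝ) : Prop where
  deriv1 : ∀ t ∈ s, HasDerivWithinAt y1 (-Δ * y2 t + f1 t) s t
  deriv2 : ∀ t ∈ s, HasDerivWithinAt y2 (Δ * y1 t - c * y3 t + f2 t) s t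
  deriv3 : ∀ t ∈ s, HasDerivWithinAt y3 (c * y2 t + f3 t) s t

namespace IsForcedRotation

variable {Δ c : ℝ} {s : Set ℝ} {y1 y2 y3 z1 z2 z3 f1 f2 f3 g1 g2 g3 : ℝ → ℝ}

theorem congr_forcing (h : IsForcedRotation Δ c s y1 y2 y3 f1 f2 f3)
    (e1 : ∀ t ∈ s, f1 t = g1 t) (e2 : ∀ t ∈ s, f2 t = g2 t) (e3 : ∀ t ∈ s, f3 t = g3 t) :
    IsForcedRotation Δ c s y1 y2 y3 g1 g2 g3 where
  deriv1 t ht := e1 t ht ▸ h.deriv1 t ht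
  deriv2 t ht := e2 t ht ▸ h.deriv2 t ht
  deriv3 t ht := e3 t ht ▸ h.deriv3 t ht

/-- The rotational parts combine by the Jacobi identity
`(ω × y) × z + y × (ω × z) = ω × (y × z)`. -/
theorem cross (hy : IsForcedRotation Δ c s y1 y2 y3 f1 f2 f3)
    (hz : IsForcedRotation Δ c s z1 z2 z3 g1 g2 g3) :
    IsForcedRotation Δ c s
      (fun t => y2 t * z3 t - y3 t * z2 t)
      (fun t => y3 t * z1 t - y1 t * z3 t)
      (fun t => y1 t * z2 t - y2 t * z1 t)
      (fun t => f2 t * z3 t - f3 t * z2 t + (y2 t * g3 t - y3 t * g2 t))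
      (fun t => f3 t * z1 t - f1 t * z3 t + (y3 t * g1 t - y1 t * g3 t))
      (fun t => f1 t * z2 t - f2 t * z1 t + (y1 t * g2 t - y2 t * g1 t)) where
  deriv1 t ht := (((hy.deriv2 t ht).mul (hz.deriv3 t ht)).sub
    ((hy.deriv3 t ht).mul (hz.deriv2 t ht))).congr_deriv (by ring)
  deriv2 t ht := (((hy.deriv3 t ht).mul (hz.deriv1 t ht)).sub
    ((hy.deriv1 t ht).mul (hz.deriv3 t ht))).congr_deriv (by ring)
  deriv3 t ht := (((hy.deriv1 t ht).mul (hz.deriv2 t ht)).sub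
    ((hy.deriv2 t ht).mul (hz.deriv1 t ht))).congr_deriv (by ring)

end IsForcedRotation

section SwitchingDerivatives

variable {Δ c : ℝ} {s : Set ℝ} {x1 x2 x3 m1 m2 m3 : ℝ → ℝ}
  (hX : IsForcedRotation Δ c s x1 x2 x3 0 0 0)
  (hM : IsForcedRotation Δ c s m1 m2 m3 0 (fun t => x3 t * x1 t) (fun t => -(x2 t * x1 t)))
include hX hM

theorem hasDerivWithinAt_switching_third {t : ℝ} (ht : t ∈ s) :
    HasDerivWithinAt (fun t => -Δ * (Δ * m1 t - c * m3 t + x3 t * x1 t))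
      (-Δ * (-(Δ ^ 2 + c ^ 2) * m2 t + 2 * c * (x1 t * x2 t) - Δ * (x2 t * x3 t))) s t :=
  ((((hM.deriv1 t ht).const_mul Δ).sub ((hM.deriv3 t ht).const_mul c)).add
    ((hX.deriv3 t ht).mul (hX.deriv1 t ht))).const_mul (-Δ)
    |>.congr_deriv (by simp only [Pi.zero_apply]; ring)

theorem hasDerivWithinAt_switching_fourth {t : ℝ} (ht : t ∈ s) :
    HasDerivWithinAt
      (fun t => -Δ * (-(Δ ^ 2 + c ^ 2) * m2 t + 2 * c * (x1 t * x2 t) - Δ * (x2 t * x3 t)))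
      (-Δ * (-(Δ ^ 2 + c ^ 2) * (Δ * m1 t - c * m3 t + x3 t * x1 t)
        + 2 * c * (-Δ * x2 t * x2 t + x1 t * (Δ * x1 t - c * x3 t))
        - Δ * ((Δ * x1 t - c * x3 t) * x3 t + c * x2 t * x2 t))) s t :=
  ((((hM.deriv2 t ht).const_mul (-(Δ ^ 2 + c ^ 2))).add
    (((hX.deriv1 t ht).mul (hX.deriv2 t ht)).const_mul (2 * c))).sub
    (((hX.deriv2 t ht).mul (hX.deriv3 t ht)).const_mul Δ)).const_mul (-Δ)
    |>.congr_deriv (by simp only [Pi.zero_apply]; ring)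

end SwitchingDerivatives

theorem switching_function_flat_at_target_general
    (Δ : ℝ) (T ε c lam : ℝ)
    (x1 x2 x3 p1 p2 p3 : ℝ → ℝ)
    (hx1 : ∀ t ∈ Icc (T - ε) T, HasDerivWithinAt x1 (-Δ * x2 t) (Icc (T - ε) T) t)
    (hx2 : ∀ t ∈ Icc (T - ε) T, HasDerivWithinAt x2 (Δ * x1 t - c * x3 t) (Icc (T - ε) T) t)
    (hx3 : ∀ t ∈ Icc (T - ε) T, HasDerivWithinAt x3 (c * x2 t) (Icc (T - ε) T) t)
    (hp1 : ∀ t ∈ Icc (T - ε) T, HasDerivWithinAt p1 (-Δ * p2 t + x1 t) (Icc (T - ε) T) t)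
    (hp2 : ∀ t ∈ Icc (T - ε) T, HasDerivWithinAt p2 (Δ * p1 t - c * p3 t) (Icc (T - ε) T) t)
    (hp3 : ∀ t ∈ Icc (T - ε) T, HasDerivWithinAt p3 (c * p2 t) (Icc (T - ε) T) t)
    (hXT : x1 T = 0 ∧ x2 T = 0 ∧ x3 T = 1)
    (hPT : p1 T = 0 ∧ p2 T = 0 ∧ p3 T = lam) :
    ∃ Φ1 Φ2 Φ3 Φ4 : ℝ → ℝ,
      (∀ t ∈ Icc (T - ε) T,
        HasDerivWithinAt (fun s => p3 s * x2 s - p2 s * x3 s) (Φ1 t) (Icc (T - ε) T) t) ∧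
      (∀ t ∈ Icc (T - ε) T, HasDerivWithinAt Φ1 (Φ2 t) (Icc (T - ε) T) t) ∧
      (∀ t ∈ Icc (T - ε) T, HasDerivWithinAt Φ2 (Φ3 t) (Icc (T - ε) T) t) ∧
      (∀ t ∈ Icc (T - ε) T, HasDerivWithinAt Φ3 (Φ4 t) (Icc (T - ε) T) t) ∧
      p3 T * x2 T - p2 T * x3 T = 0 ∧
      Φ1 T = 0 ∧ Φ2 T = 0 ∧ Φ3 T = 0 ∧ Φ4 T = -c * Δ ^ 2 := by
  obtain ⟨hx1T, hx2T, hx3T⟩ := hXT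
  obtain ⟨hp1T, hp2T, -⟩ := hPT
  have hX : IsForcedRotation Δ c (Icc (T - ε) T) x1 x2 x3 0 0 0 :=
    ⟨by simpa using hx1, by simpa using hx2, by simpa using hx3⟩
  have hP : IsForcedRotation Δ c (Icc (T - ε) T) p1 p2 p3 x1 0 0 :=
    ⟨hp1, by simpa using hp2, by simpa using hp3⟩
  have hM := (hX.cross hP).congr_forcing (g1 := 0) (g2 := fun t => x3 t * x1 t)
    (g3 := fun t => -(x2 t * x1 t)) (by simp) (by simp) (by simp)
  rw [show (fun s => p3 s * x2 s - p2 s * x3 s) = fun s => x2 s * p3 s - x3 s * p2 s from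
    funext fun s => by ring]
  refine ⟨fun t => -Δ * (x3 t * p1 t - x1 t * p3 t), _, _, _,
    fun t ht => (hM.deriv1 t ht).congr_deriv (by simp),
    fun t ht => (hM.deriv2 t ht).const_mul (-Δ),
    fun t ht => hasDerivWithinAt_switching_third hX hM ht,
    fun t ht => hasDerivWithinAt_switching_fourth hX hM ht, ?_, ?_, ?_, ?_, ?_⟩ <;>
    simp [hx1T, hx2T, hx3T, hp1T, hp2T]
  ring

/-- Let (X, P) solve the extremal system on [T − ε, T] with control
constantly c ∈ {−1, +1}, with X(T) = (0, 0, 1) and P(T) = λ (0, 0, 1).  Then the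
switching function Φ = p3 x2 − p2 x3 satisfies
Φ(T) = Φ̇(T) = Φ̈(T) = Φ⁽³⁾(T) = 0 and Φ⁽⁴⁾(T) = −c Δ². -/
theorem switching_function_flat_at_target
    (Δ : ℝ) (hΔ : Δ ≠ 0) (T ε c lam : ℝ) (hε : 0 < ε) (hc : c = 1 ∨ c = -1)
    (x1 x2 x3 p1 p2 p3 : ℝ → ℝ)
    (hx1 : ∀ t ∈ Icc (T - ε) T, HasDerivWithinAt x1 (-Δ * x2 t) (Icc (T - ε) T) t)
    (hx2 : ∀ t ∈ Icc (T - ε) T, HasDerivWithinAt x2 (Δ * x1 t - c * x3 t) (Icc (T - ε) T) t)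
    (hx3 : ∀ t ∈ Icc (T - ε) T, HasDerivWithinAt x3 (c * x2 t) (Icc (T - ε) T) t)
    (hp1 : ∀ t ∈ Icc (T - ε) T, HasDerivWithinAt p1 (-Δ * p2 t + x1 t) (Icc (T - ε) T) t)
    (hp2 : ∀ t ∈ Icc (T - ε) T, HasDerivWithinAt p2 (Δ * p1 t - c * p3 t) (Icc (T - ε) T) t)
    (hp3 : ∀ t ∈ Icc (T - ε) T, HasDerivWithinAt p3 (c * p2 t) (Icc (T - ε) T) t)
    (hXT : x1 T = 0 ∧ x2 T = 0 ∧ x3 T = 1)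
    (hPT : p1 T = 0 ∧ p2 T = 0 ∧ p3 T = lam) :
    ∃ Φ1 Φ2 Φ3 Φ4 : ℝ → ℝ,
      (∀ t ∈ Icc (T - ε) T,
        HasDerivWithinAt (fun s => p3 s * x2 s - p2 s * x3 s) (Φ1 t) (Icc (T - ε) T) t) ∧
      (∀ t ∈ Icc (T - ε) T, HasDerivWithinAt Φ1 (Φ2 t) (Icc (T - ε) T) t) ∧
      (∀ t ∈ Icc (T - ε) T, HasDerivWithinAt Φ2 (Φ3 t) (Icc (T - ε) T) t) ∧
      (∀ t ∈ Icc (T - ε) T, HasDerivWithinAt Φ3 (Φ4 t) (Icc (T - ε) T) t) ∧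
      p3 T * x2 T - p2 T * x3 T = 0 ∧
      Φ1 T = 0 ∧ Φ2 T = 0 ∧ Φ3 T = 0 ∧ Φ4 T = -c * Δ ^ 2 :=
  switching_function_flat_at_target_general Δ T ε c lam x1 x2 x3 p1 p2 p3 hx1 hx2 hx3 hp1 hp2 hp3
    hXT hPT
end

section
/- Let (X, P) solve the extremal system on [T − ε, T] with control constantly equal to c ∈ {−1, +1}, and suppose X(T) = (0, 0, 1) and P(T) = λ (0, 0, 1) for some λ ∈ ℝ. Then there exists δ > 0 such that for all t ∈ (T − δ, T), the switching function Φ(t) is nonzero and has sign opposite to c (i.e. c · Φ(t) < 0). In particular the Pontryagin maximization condition u(t) = sign Φ(t) fails on (T − δ, T). -/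
/-!
Along an extremal with constant control `c`, the switching function `Φ` and its first three
derivatives all vanish at the target `X(T) = e₃`, `P(T) = λ e₃`, while `Φ⁗(T) = -Δ² c`.
So `Φ` has a zero of order exactly four at `T`: by monotonicity, a function vanishing at `T`
has, left of `T`, the sign opposite to that of its derivative, and four such sign flips show
that near `T` on the left `Φ` has the sign of `Φ⁗(T)`, i.e. the sign of `-c`.
-/

open Set Filter Topology

section IteratedDerivatives

variable {a b : ℝ}

theorem pos_of_hasDerivWithinAt_neg_of_eq_zero {g g' : ℝ → ℝ}
    (hg : ∀ t ∈ Icc a b, HasDerivWithinAt g (g' t) (Icc a b) t)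
    (hg' : ∀ t ∈ Ioo a b, g' t < 0) (hb : g b = 0) :
    ∀ t ∈ Ico a b, 0 < g t := by
  have hanti : StrictAntiOn g (Icc a b) := by
    refine strictAntiOn_of_hasDerivWithinAt_neg (convex_Icc a b)
      (fun t ht => (hg t ht).continuousWithinAt) (fun t ht => ?_) (by simpa using hg')
    rw [interior_Icc] at ht ⊢
    exact (hg t (Ioo_subset_Icc_self ht)).mono Ioo_subset_Icc_self
  intro t ht
  simpa [hb] using hanti ⟨ht.1, ht.2.le⟩ ⟨ht.1.trans ht.2.le, le_rfl⟩ ht.2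

theorem pos_of_iterated_hasDerivWithinAt (n : ℕ) (f : ℕ → ℝ → ℝ)
    (hf : ∀ k < n, ∀ t ∈ Icc a b, HasDerivWithinAt (f k) (f (k + 1) t) (Icc a b) t)
    (hb : ∀ k < n, f k b = 0) (hn : ∀ t ∈ Ioo a b, 0 < f n t) :
    ∀ t ∈ Ioo a b, 0 < (-1) ^ n * f 0 t := by
  induction n generalizing f with
  | zero => simpa using hn
  | succ n ih =>
    have hf₁ : ∀ t ∈ Ioo a b, 0 < (-1) ^ n * f 1 t :=
      ih (fun k => f (k + 1)) (fun k hk => hf (k + 1) (by omega))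
        (fun k hk => hb (k + 1) (by omega)) hn
    intro t ht
    refine pos_of_hasDerivWithinAt_neg_of_eq_zero (g' := fun t => (-1) ^ (n + 1) * f 1 t)
      (fun t ht => (hf 0 n.succ_pos t ht).const_mul _) (fun t ht => ?_)
      (by simp [hb 0 n.succ_pos]) t (Ioo_subset_Ico_self ht)
    linarith [hf₁ t ht, show (-1 : ℝ) ^ (n + 1) * f 1 t = -((-1) ^ n * f 1 t) by ring]

theorem exists_forall_Ioo_pos_of_continuousWithinAt {g : ℝ → ℝ} (hab : a < b)
    (hg : ContinuousWithinAt g (Icc a b) b) (hb : 0 < g b) :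
    ∃ δ, 0 < δ ∧ δ ≤ b - a ∧ ∀ t ∈ Ioo (b - δ) b, 0 < g t := by
  have hev : ∀ᶠ t in 𝓝[≤] b, 0 < g t := by
    rw [← nhdsWithin_Icc_eq_nhdsLE hab]
    exact hg.eventually (lt_mem_nhds hb)
  obtain ⟨l, hl, hsub⟩ := mem_nhdsLE_iff_exists_Ioc_subset.1 hev
  refine ⟨min (b - l) (b - a), lt_min (sub_pos.2 hl) (sub_pos.2 hab), min_le_right _ _,
    fun t ht => hsub ⟨?_, ht.2.le⟩⟩
  linarith [ht.1, min_le_left (b - l) (b - a)]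

theorem exists_forall_Ioo_pos_of_iterated_hasDerivWithinAt (hab : a < b) (n : ℕ)
    (f : ℕ → ℝ → ℝ)
    (hf : ∀ k < n, ∀ t ∈ Icc a b, HasDerivWithinAt (f k) (f (k + 1) t) (Icc a b) t)
    (hb : ∀ k < n, f k b = 0) (hcont : ContinuousWithinAt (f n) (Icc a b) b)
    (hn : 0 < f n b) :
    ∃ δ, 0 < δ ∧ δ ≤ b - a ∧ ∀ t ∈ Ioo (b - δ) b, 0 < (-1) ^ n * f 0 t := by
  obtain ⟨δ, hδ, hδab, hpos⟩ := exists_forall_Ioo_pos_of_continuousWithinAt hab hcont hn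
  have hsub : Icc (b - δ) b ⊆ Icc a b := Icc_subset_Icc_left (by linarith)
  exact ⟨δ, hδ, hδab, pos_of_iterated_hasDerivWithinAt n f
    (fun k hk t ht => (hf k hk t (hsub ht)).mono hsub) hb hpos⟩

end IteratedDerivatives

section SwitchingFunction

structure IsConstControlExtremalAt_s7 (Δ c : ℝ) (x1 x2 x3 p1 p2 p3 : ℝ → ℝ) (s : Set ℝ)
    (t : ℝ) : Prop where
  deriv_x1 : HasDerivWithinAt x1 (-Δ * x2 t) s t
  deriv_x2 : HasDerivWithinAt x2 (Δ * x1 t - c * x3 t) s t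
  deriv_x3 : HasDerivWithinAt x3 (c * x2 t) s t
  deriv_p1 : HasDerivWithinAt p1 (-Δ * p2 t + x1 t) s t
  deriv_p2 : HasDerivWithinAt p2 (Δ * p1 t - c * p3 t) s t
  deriv_p3 : HasDerivWithinAt p3 (c * p2 t) s t

variable {Δ c : ℝ} {x1 x2 x3 p1 p2 p3 : ℝ → ℝ} {s : Set ℝ} {t : ℝ}

/-- The `k`-th derivative of the switching function `Φ = p3 x2 - p2 x3` along an extremal with
constant control `c`, for `k ≤ 4` (the value for `k > 4` is meaningless). -/
def switchingDeriv (Δ c : ℝ) (x1 x2 x3 p1 p2 p3 : ℝ → ℝ) : ℕ → ℝ → ℝ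
  | 0 => fun t => p3 t * x2 t - p2 t * x3 t
  | 1 => fun t => Δ * (p3 t * x1 t - p1 t * x3 t)
  | 2 => fun t =>
    Δ * (c * (p2 t * x1 t - p1 t * x2 t) - Δ * (p3 t * x2 t - p2 t * x3 t) - x1 t * x3 t)
  | 3 => fun t =>
    Δ * (-(Δ ^ 2 + c ^ 2) * (p3 t * x1 t - p1 t * x3 t) - 2 * c * (x1 t * x2 t)
      + Δ * (x2 t * x3 t))
  | _ => fun t =>
    Δ * (-(Δ ^ 2 + c ^ 2) * (c * (p2 t * x1 t - p1 t * x2 t)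
          - Δ * (p3 t * x2 t - p2 t * x3 t) - x1 t * x3 t)
      - 2 * c * (-Δ * x2 t ^ 2 + Δ * x1 t ^ 2 - c * (x1 t * x3 t))
      + Δ * (Δ * (x1 t * x3 t) - c * x3 t ^ 2 + c * x2 t ^ 2))

theorem IsConstControlExtremalAt_s7.hasDerivWithinAt_switchingDeriv
    (h : IsConstControlExtremalAt_s7 Δ c x1 x2 x3 p1 p2 p3 s t) {k : ℕ} (hk : k < 4) :
    HasDerivWithinAt (switchingDeriv Δ c x1 x2 x3 p1 p2 p3 k)
      (switchingDeriv Δ c x1 x2 x3 p1 p2 p3 (k + 1) t) s t := by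
  obtain ⟨hx1, hx2, hx3, hp1, hp2, hp3⟩ := h
  interval_cases k
  · exact ((hp3.mul hx2).sub (hp2.mul hx3)).congr_deriv (by simp only [switchingDeriv]; ring)
  · exact (((hp3.mul hx1).sub (hp1.mul hx3)).const_mul Δ).congr_deriv
      (by simp only [switchingDeriv]; ring)
  · exact ((((((hp2.mul hx1).sub (hp1.mul hx2)).const_mul c).sub
      (((hp3.mul hx2).sub (hp2.mul hx3)).const_mul Δ)).sub (hx1.mul hx3)).const_mul Δ).congr_deriv
      (by simp only [switchingDeriv]; ring)
  · exact ((((((hp3.mul hx1).sub (hp1.mul hx3)).const_mul (-(Δ ^ 2 + c ^ 2))).sub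
      ((hx1.mul hx2).const_mul (2 * c))).add ((hx2.mul hx3).const_mul Δ)).const_mul Δ).congr_deriv
      (by simp only [switchingDeriv]; ring)

theorem IsConstControlExtremalAt_s7.continuousWithinAt_switchingDeriv_four
    (h : IsConstControlExtremalAt_s7 Δ c x1 x2 x3 p1 p2 p3 s t) :
    ContinuousWithinAt (switchingDeriv Δ c x1 x2 x3 p1 p2 p3 4) s t := by
  have := h.deriv_x1.continuousWithinAt
  have := h.deriv_x2.continuousWithinAt
  have := h.deriv_x3.continuousWithinAt
  have := h.deriv_p1.continuousWithinAt
  have := h.deriv_p2.continuousWithinAt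
  have := h.deriv_p3.continuousWithinAt
  simp only [switchingDeriv]
  fun_prop

end SwitchingFunction

theorem ne_sign_of_mul_neg {c x : ℝ} (h : c * x < 0) : c ≠ Real.sign x := by
  rintro rfl
  linarith [Real.sign_mul_nonneg x]

/-- Let (X, P) solve the extremal system on [T − ε, T] with control
constantly c ∈ {−1, +1}, with X(T) = (0, 0, 1) and P(T) = λ (0, 0, 1).  Then there is
δ > 0 such that on (T − δ, T) the switching function Φ = p3 x2 − p2 x3 is nonzero with
sign opposite to c (c Φ < 0); in particular the Pontryagin maximization condition
u(t) = sign Φ(t) fails there. -/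
theorem switching_function_opposite_sign_near_target
    (Δ : ℝ) (hΔ : Δ ≠ 0) (T ε c lam : ℝ) (hε : 0 < ε) (hc : c = 1 ∨ c = -1)
    (x1 x2 x3 p1 p2 p3 : ℝ → ℝ)
    (hx1 : ∀ t ∈ Icc (T - ε) T, HasDerivWithinAt x1 (-Δ * x2 t) (Icc (T - ε) T) t)
    (hx2 : ∀ t ∈ Icc (T - ε) T, HasDerivWithinAt x2 (Δ * x1 t - c * x3 t) (Icc (T - ε) T) t)
    (hx3 : ∀ t ∈ Icc (T - ε) T, HasDerivWithinAt x3 (c * x2 t) (Icc (T - ε) T) t)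
    (hp1 : ∀ t ∈ Icc (T - ε) T, HasDerivWithinAt p1 (-Δ * p2 t + x1 t) (Icc (T - ε) T) t)
    (hp2 : ∀ t ∈ Icc (T - ε) T, HasDerivWithinAt p2 (Δ * p1 t - c * p3 t) (Icc (T - ε) T) t)
    (hp3 : ∀ t ∈ Icc (T - ε) T, HasDerivWithinAt p3 (c * p2 t) (Icc (T - ε) T) t)
    (hXT : x1 T = 0 ∧ x2 T = 0 ∧ x3 T = 1)
    (hPT : p1 T = 0 ∧ p2 T = 0 ∧ p3 T = lam) :
    ∃ δ : ℝ, 0 < δ ∧ δ ≤ ε ∧ ∀ t ∈ Ioo (T - δ) T,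
      p3 t * x2 t - p2 t * x3 t ≠ 0 ∧
      c * (p3 t * x2 t - p2 t * x3 t) < 0 ∧
      c ≠ Real.sign (p3 t * x2 t - p2 t * x3 t) := by
  obtain ⟨hX1, hX2, hX3⟩ := hXT
  obtain ⟨hP1, hP2, hP3⟩ := hPT
  have hext : ∀ t ∈ Icc (T - ε) T,
      IsConstControlExtremalAt_s7 Δ c x1 x2 x3 p1 p2 p3 (Icc (T - ε) T) t :=
    fun t ht => ⟨hx1 t ht, hx2 t ht, hx3 t ht, hp1 t ht, hp2 t ht, hp3 t ht⟩
  have hTT : T ∈ Icc (T - ε) T := right_mem_Icc.2 (by linarith)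
  set D := switchingDeriv Δ c x1 x2 x3 p1 p2 p3
  have hDT : ∀ k < 4, D k T = 0 := by
    intro k hk
    interval_cases k <;> simp [D, switchingDeriv, hX1, hX2, hX3, hP1, hP2, hP3]
  have hD4 : -c * D 4 T = (c * Δ) ^ 2 := by
    simp only [D, switchingDeriv, hX1, hX2, hX3, hP1, hP2, hP3]; ring
  have hc0 : c ≠ 0 := by rcases hc with rfl | rfl <;> norm_num
  obtain ⟨δ, hδ, hδε, hpos⟩ := exists_forall_Ioo_pos_of_iterated_hasDerivWithinAt
    (by linarith) 4 (fun k t => -c * D k t)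
    (fun k hk t ht => ((hext t ht).hasDerivWithinAt_switchingDeriv hk).const_mul (-c))
    (fun k hk => by simp [hDT k hk])
    ((hext T hTT).continuousWithinAt_switchingDeriv_four.const_mul _)
    (by rw [hD4]; exact sq_pos_of_ne_zero (mul_ne_zero hc0 hΔ))
  refine ⟨δ, hδ, by linarith, fun t ht => ?_⟩
  have hneg : c * (p3 t * x2 t - p2 t * x3 t) < 0 := by
    have := hpos t ht
    simp only [D, switchingDeriv] at this
    linarith
  exact ⟨right_ne_zero_of_mul hneg.ne, hneg, ne_sign_of_mul_neg hneg⟩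
end

section
/- Let (X, P) solve the extremal system on [0, T] with measurable control u taking values in [−1, 1], suppose X(T) = (0, 0, 1), P(T) = λ (0, 0, 1) for some λ ∈ ℝ, and suppose the Pontryagin maximization condition holds: u(t) = sign Φ(t) whenever Φ(t) ≠ 0. Then there is no ε > 0 such that u is constantly +1 or constantly −1 on [T − ε, T]. Consequently such an extremal cannot be a finite concatenation of bang arcs on any left neighborhood of T. -/
/-!
On a final bang arc `u ≡ s` the derivatives of the switching function `Φ` can be computed
explicitly.  Because `X(T) = e₃` and `P(T) ∥ e₃`, the functions `Φ, Φ', Φ'', Φ'''` all vanish at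
`T`, while `Φ''''(T) = -s Δ²`.  Hence `s Φ < 0` just before `T`, so the maximum condition forces
`u = sign Φ = -s` there, contradicting `u ≡ s`.
-/

open Set Filter Topology

theorem Real.sign_ne_of_mul_neg {s x : ℝ} (h : s * x < 0) : Real.sign x ≠ s := by
  rcases mul_neg_iff.1 h with ⟨hs, hx⟩ | ⟨hs, hx⟩
  · rw [Real.sign_of_neg hx]; linarith
  · rw [Real.sign_of_pos hx]; linarith

theorem eventually_pos_of_hasDerivWithinAt_of_eventually_neg {f f' : ℝ → ℝ} {a b : ℝ}
    (hab : a < b) (hf : ∀ t ∈ Icc a b, HasDerivWithinAt f (f' t) (Icc a b) t) (hb : f b = 0)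
    (hf' : ∀ᶠ t in 𝓝[<] b, f' t < 0) : ∀ᶠ t in 𝓝[<] b, 0 < f t := by
  obtain ⟨c, hcb, hc⟩ := mem_nhdsLT_iff_exists_Ioo_subset.1 hf'
  set D := Icc (max a c) b
  have hDsub : D ⊆ Icc a b := Icc_subset_Icc_left (le_max_left a c)
  have hanti : StrictAntiOn f D := by
    refine strictAntiOn_of_hasDerivWithinAt_neg (f' := f') (convex_Icc _ _)
      (fun t ht => (hf t (hDsub ht)).continuousWithinAt.mono hDsub) (fun t ht => ?_) (fun t ht => ?_)
    · exact (hf t (hDsub (interior_subset ht))).mono (interior_subset.trans hDsub)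
    · rw [interior_Icc] at ht
      exact hc ⟨(le_max_right a c).trans_lt ht.1, ht.2⟩
  filter_upwards [Ioo_mem_nhdsLT (max_lt hab hcb)] with t ht
  simpa [hb] using hanti (Ioo_subset_Icc_self ht) (right_mem_Icc.2 (max_lt hab hcb).le) ht.2

theorem eventually_neg_one_pow_mul_pos_of_hasDerivWithinAt {f : ℕ → ℝ → ℝ} {a b : ℝ} {n : ℕ}
    (hab : a < b) (hf : ∀ k < n, ∀ t ∈ Icc a b, HasDerivWithinAt (f k) (f (k + 1) t) (Icc a b) t)
    (hb : ∀ k < n, f k b = 0) (hn : ∀ᶠ t in 𝓝[<] b, 0 < f n t) :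
    ∀ᶠ t in 𝓝[<] b, 0 < (-1) ^ n * f 0 t := by
  induction n generalizing f with
  | zero => simpa using hn
  | succ n ih =>
    have h₁ : ∀ᶠ t in 𝓝[<] b, 0 < (-1) ^ n * f 1 t :=
      ih (f := fun k => f (k + 1)) (fun k hk => hf (k + 1) (by omega))
        (fun k hk => hb (k + 1) (by omega)) hn
    refine eventually_pos_of_hasDerivWithinAt_of_eventually_neg hab
      (fun t ht => (hf 0 n.succ_pos t ht).const_mul ((-1) ^ (n + 1))) (by simp [hb 0 n.succ_pos]) ?_
    filter_upwards [h₁] with t ht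
    rw [pow_succ]; linarith

structure Extremal (Δ : ℝ) (u : ℝ → ℝ) (J : Set ℝ) where
  (x1 x2 x3 p1 p2 p3 : ℝ → ℝ)
  hx1 : ∀ t ∈ J, HasDerivWithinAt x1 (-Δ * x2 t) J t
  hx2 : ∀ t ∈ J, HasDerivWithinAt x2 (Δ * x1 t - u t * x3 t) J t
  hx3 : ∀ t ∈ J, HasDerivWithinAt x3 (u t * x2 t) J t
  hp1 : ∀ t ∈ J, HasDerivWithinAt p1 (-Δ * p2 t + x1 t) J t
  hp2 : ∀ t ∈ J, HasDerivWithinAt p2 (Δ * p1 t - u t * p3 t) J t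
  hp3 : ∀ t ∈ J, HasDerivWithinAt p3 (u t * p2 t) J t

namespace Extremal

section

variable {Δ : ℝ} {u v : ℝ → ℝ} {J J' : Set ℝ} {t : ℝ}

def restrict (E : Extremal Δ u J) (hJ : J' ⊆ J) (hu : EqOn u v J') : Extremal Δ v J' where
  x1 := E.x1
  x2 := E.x2
  x3 := E.x3
  p1 := E.p1
  p2 := E.p2
  p3 := E.p3
  hx1 t ht := (E.hx1 t (hJ ht)).mono hJ
  hx2 t ht := hu ht ▸ (E.hx2 t (hJ ht)).mono hJ
  hx3 t ht := hu ht ▸ (E.hx3 t (hJ ht)).mono hJ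
  hp1 t ht := (E.hp1 t (hJ ht)).mono hJ
  hp2 t ht := hu ht ▸ (E.hp2 t (hJ ht)).mono hJ
  hp3 t ht := hu ht ▸ (E.hp3 t (hJ ht)).mono hJ

/-- `(m₁, -m₂, m₃) = X × P`, and `m₁` is the switching function `Φ`. -/
def m₁ (E : Extremal Δ u J) (t : ℝ) : ℝ := E.p3 t * E.x2 t - E.p2 t * E.x3 t

def m₂ (E : Extremal Δ u J) (t : ℝ) : ℝ := E.p3 t * E.x1 t - E.p1 t * E.x3 t

def m₃ (E : Extremal Δ u J) (t : ℝ) : ℝ := E.p2 t * E.x1 t - E.p1 t * E.x2 t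

variable (E : Extremal Δ u J)

theorem hasDerivWithinAt_m₁ (ht : t ∈ J) : HasDerivWithinAt E.m₁ (Δ * E.m₂ t) J t := by
  refine (((E.hp3 t ht).mul (E.hx2 t ht)).sub ((E.hp2 t ht).mul (E.hx3 t ht))).congr_deriv ?_
  simp only [m₂]; ring

theorem hasDerivWithinAt_m₂ (ht : t ∈ J) :
    HasDerivWithinAt E.m₂ (u t * E.m₃ t - Δ * E.m₁ t - E.x1 t * E.x3 t) J t := by
  refine (((E.hp3 t ht).mul (E.hx1 t ht)).sub ((E.hp1 t ht).mul (E.hx3 t ht))).congr_deriv ?_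
  simp only [m₁, m₃]; ring

theorem hasDerivWithinAt_m₃ (ht : t ∈ J) :
    HasDerivWithinAt E.m₃ (-u t * E.m₂ t - E.x1 t * E.x2 t) J t := by
  refine (((E.hp2 t ht).mul (E.hx1 t ht)).sub ((E.hp1 t ht).mul (E.hx2 t ht))).congr_deriv ?_
  simp only [m₂]; ring

end

section

variable {Δ s : ℝ} {J : Set ℝ} {t : ℝ} (E : Extremal Δ (fun _ => s) J)

/-- For `k ≤ 4`, the `k`-th derivative of `m₁` along a bang arc `u ≡ s`. -/
def switchingDeriv : ℕ → ℝ → ℝ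
  | 0 => E.m₁
  | 1 => fun t => Δ * E.m₂ t
  | 2 => fun t => Δ * (s * E.m₃ t - Δ * E.m₁ t - E.x1 t * E.x3 t)
  | 3 => fun t => Δ * (-(s ^ 2 + Δ ^ 2) * E.m₂ t - 2 * s * (E.x1 t * E.x2 t) + Δ * (E.x2 t * E.x3 t))
  | 4 => fun t => Δ * (-(s ^ 2 + Δ ^ 2) * (s * E.m₃ t - Δ * E.m₁ t - E.x1 t * E.x3 t)
      - 2 * s * (Δ * E.x1 t ^ 2 - Δ * E.x2 t ^ 2 - s * E.x1 t * E.x3 t)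
      + Δ * (Δ * E.x1 t * E.x3 t - s * E.x3 t ^ 2 + s * E.x2 t ^ 2))
  | _ => 0

theorem hasDerivWithinAt_switchingDeriv {k : ℕ} (hk : k < 4) (ht : t ∈ J) :
    HasDerivWithinAt (E.switchingDeriv k) (E.switchingDeriv (k + 1) t) J t := by
  have hm₁ := E.hasDerivWithinAt_m₁ ht
  have hm₂ := E.hasDerivWithinAt_m₂ ht
  have hm₃ := E.hasDerivWithinAt_m₃ ht
  have hx13 := (E.hx1 t ht).mul (E.hx3 t ht)
  have hx12 := (E.hx1 t ht).mul (E.hx2 t ht)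
  have hx23 := (E.hx2 t ht).mul (E.hx3 t ht)
  interval_cases k
  · exact hm₁
  · exact hm₂.const_mul Δ
  · refine ((((hm₃.const_mul s).sub (hm₁.const_mul Δ)).sub hx13).const_mul Δ).congr_deriv ?_
    simp only [switchingDeriv]; ring
  · refine ((((hm₂.const_mul (-(s ^ 2 + Δ ^ 2))).sub (hx12.const_mul (2 * s))).add
      (hx23.const_mul Δ)).const_mul Δ).congr_deriv ?_
    simp only [switchingDeriv]; ring

theorem continuousWithinAt_switchingDeriv_four (ht : t ∈ J) :
    ContinuousWithinAt (E.switchingDeriv 4) J t := by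
  have := (E.hx1 t ht).continuousWithinAt
  have := (E.hx2 t ht).continuousWithinAt
  have := (E.hx3 t ht).continuousWithinAt
  have := (E.hasDerivWithinAt_m₁ ht).continuousWithinAt
  have := (E.hasDerivWithinAt_m₃ ht).continuousWithinAt
  simp only [switchingDeriv]
  fun_prop

end

theorem eventually_mul_m₁_neg {Δ s a b : ℝ} (E : Extremal Δ (fun _ => s) (Icc a b)) (hab : a < b)
    (hΔ : Δ ≠ 0) (hs : s ≠ 0) (hX : E.x1 b = 0 ∧ E.x2 b = 0 ∧ E.x3 b = 1)
    (hP : E.p1 b = 0 ∧ E.p2 b = 0) : ∀ᶠ t in 𝓝[<] b, s * E.m₁ t < 0 := by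
  obtain ⟨hx1, hx2, hx3⟩ := hX
  obtain ⟨hp1, hp2⟩ := hP
  have h₄ : ∀ᶠ t in 𝓝[<] b, 0 < -s * E.switchingDeriv 4 t := by
    have hpos : 0 < -s * E.switchingDeriv 4 b := by
      simp only [switchingDeriv, m₁, m₃, hx1, hx2, hx3, hp1, hp2]
      ring_nf; positivity
    refine nhdsWithin_le_of_mem (mem_of_superset (Ioo_mem_nhdsLT hab) Ioo_subset_Icc_self) ?_
    exact ((E.continuousWithinAt_switchingDeriv_four (right_mem_Icc.2 hab.le)).const_mul
      (-s)).eventually (lt_mem_nhds hpos)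
  have h₀ := eventually_neg_one_pow_mul_pos_of_hasDerivWithinAt
    (f := fun k t => -s * E.switchingDeriv k t) (n := 4) hab
    (fun k hk t ht => (E.hasDerivWithinAt_switchingDeriv hk ht).const_mul (-s))
    (fun k hk => by interval_cases k <;> simp [switchingDeriv, m₁, m₂, m₃, hx1, hx2, hp1, hp2]) h₄
  filter_upwards [h₀] with t ht
  simp only [switchingDeriv] at ht
  linarith

end Extremal

theorem no_final_bang_arc_general
    (Δ : ℝ) (hΔ : Δ ≠ 0) (T lam : ℝ)
    (u x1 x2 x3 p1 p2 p3 : ℝ → ℝ)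
    (hx1 : ∀ t ∈ Icc 0 T, HasDerivWithinAt x1 (-Δ * x2 t) (Icc 0 T) t)
    (hx2 : ∀ t ∈ Icc 0 T, HasDerivWithinAt x2 (Δ * x1 t - u t * x3 t) (Icc 0 T) t)
    (hx3 : ∀ t ∈ Icc 0 T, HasDerivWithinAt x3 (u t * x2 t) (Icc 0 T) t)
    (hp1 : ∀ t ∈ Icc 0 T, HasDerivWithinAt p1 (-Δ * p2 t + x1 t) (Icc 0 T) t)
    (hp2 : ∀ t ∈ Icc 0 T, HasDerivWithinAt p2 (Δ * p1 t - u t * p3 t) (Icc 0 T) t)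
    (hp3 : ∀ t ∈ Icc 0 T, HasDerivWithinAt p3 (u t * p2 t) (Icc 0 T) t)
    (hXT : x1 T = 0 ∧ x2 T = 0 ∧ x3 T = 1)
    (hPT : p1 T = 0 ∧ p2 T = 0 ∧ p3 T = lam)
    (hmax : ∀ t ∈ Icc 0 T, p3 t * x2 t - p2 t * x3 t ≠ 0 →
      u t = Real.sign (p3 t * x2 t - p2 t * x3 t)) :
    ¬ ∃ ε : ℝ, 0 < ε ∧ ε ≤ T ∧
      ((∀ t ∈ Icc (T - ε) T, u t = 1) ∨ (∀ t ∈ Icc (T - ε) T, u t = -1)) := by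
  rintro ⟨ε, hε, hεT, hbang⟩
  obtain ⟨s, hs, hu⟩ : ∃ s : ℝ, s ≠ 0 ∧ ∀ t ∈ Icc (T - ε) T, u t = s :=
    hbang.elim (fun h => ⟨1, one_ne_zero, h⟩) (fun h => ⟨-1, by norm_num, h⟩)
  have hsub : Icc (T - ε) T ⊆ Icc 0 T := Icc_subset_Icc_left (by linarith)
  let E : Extremal Δ u (Icc 0 T) := ⟨x1, x2, x3, p1, p2, p3, hx1, hx2, hx3, hp1, hp2, hp3⟩
  have hΦ := (E.restrict hsub hu).eventually_mul_m₁_neg (by linarith) hΔ hs hXT ⟨hPT.1, hPT.2.1⟩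
  obtain ⟨t, hst, ht⟩ := (hΦ.and (Ioo_mem_nhdsLT (by linarith : T - ε < T))).exists
  have ht' : t ∈ Icc (T - ε) T := Ioo_subset_Icc_self ht
  have hΦt : p3 t * x2 t - p2 t * x3 t ≠ 0 := right_ne_zero_of_mul hst.ne
  exact Real.sign_ne_of_mul_neg hst ((hmax t (hsub ht') hΦt).symm.trans (hu t ht'))

/-- Let (X, P) solve the extremal system on [0, T] with measurable control
u taking values in [−1, 1], with X(T) = (0, 0, 1), P(T) = λ (0, 0, 1), and satisfying the
Pontryagin maximization condition u(t) = sign Φ(t) whenever Φ(t) ≠ 0.  Then there is no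
ε > 0 such that u is constantly +1 or constantly −1 on [T − ε, T]: the extremal is not a
finite concatenation of bang arcs on any left neighborhood of T. -/
theorem no_final_bang_arc
    (Δ : ℝ) (hΔ : Δ ≠ 0) (T lam : ℝ) (hT : 0 < T)
    (u x1 x2 x3 p1 p2 p3 : ℝ → ℝ)
    (hum : Measurable u)
    (hub : ∀ t ∈ Icc 0 T, u t ∈ Icc (-1 : ℝ) 1)
    (hx1 : ∀ t ∈ Icc 0 T, HasDerivWithinAt x1 (-Δ * x2 t) (Icc 0 T) t)
    (hx2 : ∀ t ∈ Icc 0 T, HasDerivWithinAt x2 (Δ * x1 t - u t * x3 t) (Icc 0 T) t)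
    (hx3 : ∀ t ∈ Icc 0 T, HasDerivWithinAt x3 (u t * x2 t) (Icc 0 T) t)
    (hp1 : ∀ t ∈ Icc 0 T, HasDerivWithinAt p1 (-Δ * p2 t + x1 t) (Icc 0 T) t)
    (hp2 : ∀ t ∈ Icc 0 T, HasDerivWithinAt p2 (Δ * p1 t - u t * p3 t) (Icc 0 T) t)
    (hp3 : ∀ t ∈ Icc 0 T, HasDerivWithinAt p3 (u t * p2 t) (Icc 0 T) t)
    (hXT : x1 T = 0 ∧ x2 T = 0 ∧ x3 T = 1)
    (hPT : p1 T = 0 ∧ p2 T = 0 ∧ p3 T = lam)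
    (hmax : ∀ t ∈ Icc 0 T, p3 t * x2 t - p2 t * x3 t ≠ 0 →
      u t = Real.sign (p3 t * x2 t - p2 t * x3 t)) :
    ¬ ∃ ε : ℝ, 0 < ε ∧ ε ≤ T ∧
      ((∀ t ∈ Icc (T - ε) T, u t = 1) ∨ (∀ t ∈ Icc (T - ε) T, u t = -1)) :=
  no_final_bang_arc_general Δ hΔ T lam u x1 x2 x3 p1 p2 p3 hx1 hx2 hx3 hp1 hp2 hp3 hXT hPT hmax
end

section
/- Let (X, P) solve the extremal system on an interval I with X(t) on the unit sphere for all t, suppose the reduced adjoint satisfies P̃(t) = 0 for all t ∈ I, and suppose the normal Pontryagin Hamiltonian H_P = Δ(x1 p2 − x2 p1) + u Φ − x1²/2 vanishes identically on I. Then x1 ≡ 0 and x2 ≡ 0 on I, so that X(t) is constantly equal to (0, 0, 1) or to (0, 0, −1) on I. -/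
open Set

/-- If (X, P) solves the extremal system on an interval I = (a, b) with X on
the unit sphere, the reduced adjoint P̃ = P − (P·X) X identically zero on I, and the
normal Pontryagin Hamiltonian H_P = Δ(x1 p2 − x2 p1) + u Φ − x1²/2 identically zero on I,
then x1 ≡ 0 and x2 ≡ 0 on I, so X is constantly (0, 0, 1) or constantly (0, 0, −1). -/
theorem singular_arc_at_pole
    (Δ : ℝ) (hΔ : Δ ≠ 0) (a b : ℝ) (hab : a < b)
    (u x1 x2 x3 p1 p2 p3 : ℝ → ℝ)
    (hu : ContinuousOn u (Ioo a b))
    (hx1 : ∀ t ∈ Ioo a b, HasDerivAt x1 (-Δ * x2 t) t)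
    (hx2 : ∀ t ∈ Ioo a b, HasDerivAt x2 (Δ * x1 t - u t * x3 t) t)
    (hx3 : ∀ t ∈ Ioo a b, HasDerivAt x3 (u t * x2 t) t)
    (hp1 : ∀ t ∈ Ioo a b, HasDerivAt p1 (-Δ * p2 t + x1 t) t)
    (hp2 : ∀ t ∈ Ioo a b, HasDerivAt p2 (Δ * p1 t - u t * p3 t) t)
    (hp3 : ∀ t ∈ Ioo a b, HasDerivAt p3 (u t * p2 t) t)
    (hsphere : ∀ t ∈ Ioo a b, x1 t ^ 2 + x2 t ^ 2 + x3 t ^ 2 = 1)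
    (hPtilde : ∀ t ∈ Ioo a b,
      p1 t - (p1 t * x1 t + p2 t * x2 t + p3 t * x3 t) * x1 t = 0 ∧
      p2 t - (p1 t * x1 t + p2 t * x2 t + p3 t * x3 t) * x2 t = 0 ∧
      p3 t - (p1 t * x1 t + p2 t * x2 t + p3 t * x3 t) * x3 t = 0)
    (hH : ∀ t ∈ Ioo a b,
      Δ * (x1 t * p2 t - x2 t * p1 t) + u t * (p3 t * x2 t - p2 t * x3 t)
        - x1 t ^ 2 / 2 = 0) :
    (∀ t ∈ Ioo a b, x1 t = 0 ∧ x2 t = 0) ∧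
    ((∀ t ∈ Ioo a b, x3 t = 1) ∨ (∀ t ∈ Ioo a b, x3 t = -1)) := by
  -- Step 1: x1 ≡ 0 on I.
  have h1zero : ∀ t ∈ Ioo a b, x1 t = 0 := by
    intro t ht
    obtain ⟨hq1, hq2, hq3⟩ := hPtilde t ht
    have hHt := hH t ht
    have hsq : x1 t ^ 2 = 0 := by
      linear_combination (-2 : ℝ) * hHt + 2 * Δ * x1 t * hq2 - 2 * Δ * x2 t * hq1
        + 2 * u t * x2 t * hq3 - 2 * u t * x3 t * hq2
    exact pow_eq_zero_iff (by norm_num) |>.mp hsq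
  -- Step 2: x2 ≡ 0 on I.
  have h2zero : ∀ t ∈ Ioo a b, x2 t = 0 := by
    intro t ht
    have hconst : HasDerivAt x1 0 t := by
      have hev : x1 =ᶠ[nhds t] fun _ => (0 : ℝ) := by
        filter_upwards [isOpen_Ioo.mem_nhds ht] with s hs using h1zero s hs
      exact (hasDerivAt_const t (0:ℝ)).congr_of_eventuallyEq hev
    have := (hx1 t ht).unique hconst
    have h2 : Δ * x2 t = 0 := by linarith
    rcases mul_eq_zero.mp h2 with h | h
    · exact absurd h hΔ
    · exact h
  -- Step 3: x3 t ^ 2 = 1 on I.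
  have h3sq : ∀ t ∈ Ioo a b, x3 t ^ 2 = 1 := by
    intro t ht
    have := hsphere t ht
    rw [h1zero t ht, h2zero t ht] at this
    linarith
  have hne : ∀ t ∈ Ioo a b, x3 t = 1 ∨ x3 t = -1 := by
    intro t ht
    have := h3sq t ht
    rcases mul_eq_zero.mp (show (x3 t - 1) * (x3 t + 1) = 0 by ring_nf; linarith) with h | h
    · left; linarith
    · right; linarith
  -- x3 is continuous on I.
  have hcont : ContinuousOn x3 (Ioo a b) := fun t ht =>
    (hx3 t ht).continuousAt.continuousWithinAt
  -- No point where x3 = 0, so x3 cannot take both values 1 and -1.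
  have key : ∀ s ∈ Ioo a b, ∀ t ∈ Ioo a b, x3 s = x3 t := by
    intro s hs t ht
    by_contra hne'
    have hsub : uIcc s t ⊆ Ioo a b := by
      rcases le_total s t with h | h
      · rw [uIcc_of_le h]; exact Icc_subset_Ioo hs.1 ht.2
      · rw [uIcc_of_ge h]; exact Icc_subset_Ioo ht.1 hs.2
    have hiv := intermediate_value_uIcc (hcont.mono hsub)
    have h0 : (0 : ℝ) ∈ uIcc (x3 s) (x3 t) := by
      rcases hne s hs with h1 | h1 <;> rcases hne t ht with h2 | h2 <;>
        rw [h1, h2] at hne' ⊢ <;> first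
        | exact absurd rfl hne'
        | (rw [mem_uIcc]; norm_num)
    obtain ⟨c, hc, hc0⟩ := hiv h0
    have := h3sq c (hsub hc)
    rw [hc0] at this
    norm_num at this
  set t0 := (a + b) / 2 with ht0def
  have ht0 : t0 ∈ Ioo a b := ⟨by linarith, by linarith⟩
  refine ⟨fun t ht => ⟨h1zero t ht, h2zero t ht⟩, ?_⟩
  rcases hne t0 ht0 with h | h
  · left; intro t ht; rw [key t ht t0 ht0, h]
  · right; intro t ht; rw [key t ht t0 ht0, h]
end

section
/- Let X = (x1, x2, x3) ∈ ℝ³ lie on the unit sphere and P = (p1, p2, p3) ∈ ℝ³, and suppose that at a given time both the switching function Φ = p3 x2 − p2 x3 and the quantity x1 p3 − x3 p1 vanish (this quantity equals Φ̇/Δ along the extremal system). If x3 ≠ 0, then the reduced adjoint P̃ = P − (P·X) X is zero; equivalently, if both Φ and Φ̇ vanish at a time t and P̃(t) ≠ 0, then X(t) lies on the equator x3 = 0. -/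
open Set

/-- For X = (x1, x2, x3) on the unit sphere and adjoint P = (p1, p2, p3),
if Φ = p3 x2 − p2 x3 = 0 and x1 p3 − x3 p1 = 0 (the latter equals Φ̇/Δ along the
extremal flow), then: if x3 ≠ 0 the reduced adjoint P̃ = P − (P·X) X vanishes;
equivalently, if moreover P̃ ≠ 0 then X lies on the equator x3 = 0. -/
theorem vanishing_switching_forces_equator_or_zero_adjoint
    (Δ : ℝ) (hΔ : Δ ≠ 0) :
    (∀ x1 x2 x3 p1 p2 p3 : ℝ,
      x1 ^ 2 + x2 ^ 2 + x3 ^ 2 = 1 →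
      p3 * x2 - p2 * x3 = 0 →
      x1 * p3 - x3 * p1 = 0 →
      x3 ≠ 0 →
      p1 - (p1 * x1 + p2 * x2 + p3 * x3) * x1 = 0 ∧
      p2 - (p1 * x1 + p2 * x2 + p3 * x3) * x2 = 0 ∧
      p3 - (p1 * x1 + p2 * x2 + p3 * x3) * x3 = 0) ∧
    (∀ x1 x2 x3 p1 p2 p3 : ℝ,
      x1 ^ 2 + x2 ^ 2 + x3 ^ 2 = 1 →
      p3 * x2 - p2 * x3 = 0 →
      Δ * (x1 * p3 - x3 * p1) = 0 →
      ¬(p1 - (p1 * x1 + p2 * x2 + p3 * x3) * x1 = 0 ∧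
        p2 - (p1 * x1 + p2 * x2 + p3 * x3) * x2 = 0 ∧
        p3 - (p1 * x1 + p2 * x2 + p3 * x3) * x3 = 0) →
      x3 = 0) := by
  have key : ∀ x1 x2 x3 p1 p2 p3 : ℝ,
      x1 ^ 2 + x2 ^ 2 + x3 ^ 2 = 1 →
      p3 * x2 - p2 * x3 = 0 →
      x1 * p3 - x3 * p1 = 0 →
      x3 ≠ 0 →
      p1 - (p1 * x1 + p2 * x2 + p3 * x3) * x1 = 0 ∧
      p2 - (p1 * x1 + p2 * x2 + p3 * x3) * x2 = 0 ∧
      p3 - (p1 * x1 + p2 * x2 + p3 * x3) * x3 = 0 := by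
    intro x1 x2 x3 p1 p2 p3 hs h1 h2 h3
    have e1 : p2 = p3 * x2 / x3 := by field_simp; linarith
    have e2 : p1 = p3 * x1 / x3 := by field_simp; linarith
    subst e1 e2
    refine ⟨?_, ?_, ?_⟩
    · field_simp; linear_combination (-(p3*x1)) * hs
    · field_simp; linear_combination (-(p3*x2)) * hs
    · field_simp; linear_combination (-p3) * hs
  refine ⟨key, ?_⟩
  intro x1 x2 x3 p1 p2 p3 hs h1 h2 hn
  by_contra h3
  exact hn (key x1 x2 x3 p1 p2 p3 hs h1 (by rcases mul_eq_zero.1 h2 with h | h; exact absurd h hΔ; exact h) h3)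
end

section
/- Let X = (0, 0, 1) be the target state and P = (p1, p2, p3) ∈ ℝ³ an adjoint vector with reduced adjoint P̃ = P − (P·X) X ≠ 0. If the switching function Φ = p3 x2 − p2 x3 vanishes at this point (i.e. p2 = 0), then Φ̇ = Δ(x1 p3 − x3 p1) = −Δ p1 is nonzero. Consequently, any extremal with P̃(T) ≠ 0 reaching the target (0,0,1) at time T with Φ(T) = 0 has Φ of constant nonzero sign, hence constant bang control, on some interval [T − ε, T). -/
open Set

open Filter Topology

/-!
At the target the switching function `Φ = p₃ x₂ - p₂ x₃` vanishes exactly when `p₂ = 0`, and then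
`P̃ ≠ 0` forces `p₁ ≠ 0`. Along the extremal system the control terms cancel in `Φ̇`, leaving
`Φ̇ = Δ (x₁ p₃ - x₃ p₁)`, which equals `-Δ p₁ ≠ 0` at the target. A function vanishing at `T` with
nonzero derivative there has the opposite sign of that derivative just before `T`, and the
maximum condition `u = sign Φ` turns this constant sign into a constant bang control.
-/

theorem HasDerivWithinAt.eventually_nhdsLT_lt_of_pos {f : ℝ → ℝ} {f' b : ℝ}
    (hf : HasDerivWithinAt f f' (Iio b) b) (hf' : 0 < f') : ∀ᶠ t in 𝓝[<] b, f t < f b := by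
  have hslope : ∀ᶠ t in 𝓝[<] b, 0 < slope f b t :=
    ((hasDerivWithinAt_iff_tendsto_slope' self_notMem_Iio).1 hf).eventually (lt_mem_nhds hf')
  filter_upwards [hslope, self_mem_nhdsWithin] with t hpos (ht : t < b)
  rw [slope_def_field] at hpos
  obtain ⟨hdiff, -⟩ := (div_pos_iff.1 hpos).resolve_left fun h => by linarith [h.2]
  linarith

theorem HasDerivWithinAt.eventually_nhdsLT_gt_of_neg {f : ℝ → ℝ} {f' b : ℝ}
    (hf : HasDerivWithinAt f f' (Iio b) b) (hf' : f' < 0) : ∀ᶠ t in 𝓝[<] b, f b < f t := by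
  filter_upwards [hf.neg.eventually_nhdsLT_lt_of_pos (neg_pos.2 hf')] with t ht
  exact neg_lt_neg_iff.1 ht

theorem exists_forall_Ico_of_eventually_nhdsLT {p : ℝ → Prop} {b δ : ℝ} (hδ : 0 < δ)
    (h : ∀ᶠ t in 𝓝[<] b, p t) : ∃ ε, 0 < ε ∧ ε ≤ δ ∧ ∀ t ∈ Ico (b - ε) b, p t := by
  obtain ⟨l, hl, hsub⟩ := mem_nhdsLT_iff_exists_Ico_subset.1 h
  refine ⟨min δ (b - l), lt_min hδ (sub_pos.2 hl), min_le_left _ _, fun t ht => hsub ⟨?_, ht.2⟩⟩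
  linarith [ht.1, min_le_right δ (b - l)]

def switchingFunction (x2 x3 p2 p3 : ℝ → ℝ) (t : ℝ) : ℝ :=
  p3 t * x2 t - p2 t * x3 t

theorem hasDerivWithinAt_switchingFunction {Δ : ℝ} {u x1 x2 x3 p1 p2 p3 : ℝ → ℝ} {s : Set ℝ}
    {t : ℝ} (hx2 : HasDerivWithinAt x2 (Δ * x1 t - u t * x3 t) s t)
    (hx3 : HasDerivWithinAt x3 (u t * x2 t) s t)
    (hp2 : HasDerivWithinAt p2 (Δ * p1 t - u t * p3 t) s t)
    (hp3 : HasDerivWithinAt p3 (u t * p2 t) s t) :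
    HasDerivWithinAt (switchingFunction x2 x3 p2 p3) (Δ * (x1 t * p3 t - x3 t * p1 t)) s t :=
  ((hp3.mul hx2).sub (hp2.mul hx3)).congr_deriv (by ring)

theorem p1_ne_zero_at_target_of_switchingFunction_eq_zero {x1 x2 x3 p1 p2 p3 : ℝ}
    (hx1 : x1 = 0) (hx2 : x2 = 0) (hx3 : x3 = 1) (hΦ : p3 * x2 - p2 * x3 = 0)
    (hPtilde : ¬(p1 - (p1 * x1 + p2 * x2 + p3 * x3) * x1 = 0 ∧
                 p2 - (p1 * x1 + p2 * x2 + p3 * x3) * x2 = 0 ∧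
                 p3 - (p1 * x1 + p2 * x2 + p3 * x3) * x3 = 0)) :
    p1 ≠ 0 := by
  subst hx1 hx2 hx3
  have hp2 : p2 = 0 := by linarith
  exact fun hp1 => hPtilde (by simp [hp1, hp2])

theorem final_arc_is_bang_when_reduced_adjoint_nonzero_general
    (Δ : ℝ) (hΔ : Δ ≠ 0) (T ε0 : ℝ) (hε0 : 0 < ε0)
    (u x1 x2 x3 p1 p2 p3 : ℝ → ℝ)
    (hx2 : ∀ t ∈ Icc (T - ε0) T, HasDerivWithinAt x2 (Δ * x1 t - u t * x3 t) (Icc (T - ε0) T) t)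
    (hx3 : ∀ t ∈ Icc (T - ε0) T, HasDerivWithinAt x3 (u t * x2 t) (Icc (T - ε0) T) t)
    (hp2 : ∀ t ∈ Icc (T - ε0) T, HasDerivWithinAt p2 (Δ * p1 t - u t * p3 t) (Icc (T - ε0) T) t)
    (hp3 : ∀ t ∈ Icc (T - ε0) T, HasDerivWithinAt p3 (u t * p2 t) (Icc (T - ε0) T) t)
    (hXT : x1 T = 0 ∧ x2 T = 0 ∧ x3 T = 1)
    (hΦT : p3 T * x2 T - p2 T * x3 T = 0)
    (hPtilde : ¬(p1 T - (p1 T * x1 T + p2 T * x2 T + p3 T * x3 T) * x1 T = 0 ∧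
                 p2 T - (p1 T * x1 T + p2 T * x2 T + p3 T * x3 T) * x2 T = 0 ∧
                 p3 T - (p1 T * x1 T + p2 T * x2 T + p3 T * x3 T) * x3 T = 0))
    (hmax : ∀ t ∈ Icc (T - ε0) T, p3 t * x2 t - p2 t * x3 t ≠ 0 →
      u t = Real.sign (p3 t * x2 t - p2 t * x3 t)) :
    Δ * (x1 T * p3 T - x3 T * p1 T) = -Δ * p1 T ∧
    -Δ * p1 T ≠ 0 ∧
    ∃ ε : ℝ, 0 < ε ∧ ε ≤ ε0 ∧
      ((∀ t ∈ Ico (T - ε) T, 0 < p3 t * x2 t - p2 t * x3 t ∧ u t = 1) ∨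
       (∀ t ∈ Ico (T - ε) T, p3 t * x2 t - p2 t * x3 t < 0 ∧ u t = -1)) := by
  obtain ⟨hx1T, hx2T, hx3T⟩ := hXT
  have hp1T := p1_ne_zero_at_target_of_switchingFunction_eq_zero hx1T hx2T hx3T hΦT hPtilde
  have hrate : Δ * (x1 T * p3 T - x3 T * p1 T) = -Δ * p1 T := by rw [hx1T, hx3T]; ring
  have hrate_ne : -Δ * p1 T ≠ 0 := mul_ne_zero (neg_ne_zero.2 hΔ) hp1T
  have hT : T ∈ Icc (T - ε0) T := ⟨by linarith, le_rfl⟩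
  have hΦ : HasDerivWithinAt (switchingFunction x2 x3 p2 p3) (-Δ * p1 T) (Iio T) T :=
    hrate ▸ (hasDerivWithinAt_switchingFunction (hx2 T hT) (hx3 T hT) (hp2 T hT)
      (hp3 T hT)).mono_of_mem_nhdsWithin (Icc_mem_nhdsLT (by linarith))
  refine ⟨hrate, hrate_ne, ?_⟩
  rcases hrate_ne.lt_or_gt with hneg | hpos
  · obtain ⟨ε, hε, hεle, hsign⟩ := exists_forall_Ico_of_eventually_nhdsLT hε0
      (hΦ.eventually_nhdsLT_gt_of_neg hneg)
    refine ⟨ε, hε, hεle, Or.inl fun t ht => ?_⟩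
    have hΦt : 0 < p3 t * x2 t - p2 t * x3 t := hΦT ▸ hsign t ht
    exact ⟨hΦt, (hmax t ⟨by linarith [ht.1], ht.2.le⟩ hΦt.ne').trans
      (Real.sign_of_pos hΦt)⟩
  · obtain ⟨ε, hε, hεle, hsign⟩ := exists_forall_Ico_of_eventually_nhdsLT hε0
      (hΦ.eventually_nhdsLT_lt_of_pos hpos)
    refine ⟨ε, hε, hεle, Or.inr fun t ht => ?_⟩
    have hΦt : p3 t * x2 t - p2 t * x3 t < 0 := hΦT ▸ hsign t ht
    exact ⟨hΦt, (hmax t ⟨by linarith [ht.1], ht.2.le⟩ hΦt.ne).trans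
      (Real.sign_of_neg hΦt)⟩

/-- At the target X(T) = (0, 0, 1), if the reduced adjoint
P̃(T) = P(T) − (P(T)·X(T)) X(T) is nonzero and the switching function
Φ(T) = p3 x2 − p2 x3 vanishes there (i.e. p2(T) = 0), then
Φ̇(T) = Δ(x1 p3 − x3 p1)(T) = −Δ p1(T) ≠ 0.  Consequently, any extremal satisfying the
maximization condition and reaching the target at time T with Φ(T) = 0 and P̃(T) ≠ 0 has
Φ of constant nonzero sign — hence constant bang control — on some interval [T − ε, T). -/
theorem final_arc_is_bang_when_reduced_adjoint_nonzero
    (Δ : ℝ) (hΔ : Δ ≠ 0) (T ε0 : ℝ) (hε0 : 0 < ε0)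
    (u x1 x2 x3 p1 p2 p3 : ℝ → ℝ)
    (hx1 : ∀ t ∈ Icc (T - ε0) T, HasDerivWithinAt x1 (-Δ * x2 t) (Icc (T - ε0) T) t)
    (hx2 : ∀ t ∈ Icc (T - ε0) T, HasDerivWithinAt x2 (Δ * x1 t - u t * x3 t) (Icc (T - ε0) T) t)
    (hx3 : ∀ t ∈ Icc (T - ε0) T, HasDerivWithinAt x3 (u t * x2 t) (Icc (T - ε0) T) t)
    (hp1 : ∀ t ∈ Icc (T - ε0) T, HasDerivWithinAt p1 (-Δ * p2 t + x1 t) (Icc (T - ε0) T) t)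
    (hp2 : ∀ t ∈ Icc (T - ε0) T, HasDerivWithinAt p2 (Δ * p1 t - u t * p3 t) (Icc (T - ε0) T) t)
    (hp3 : ∀ t ∈ Icc (T - ε0) T, HasDerivWithinAt p3 (u t * p2 t) (Icc (T - ε0) T) t)
    (hXT : x1 T = 0 ∧ x2 T = 0 ∧ x3 T = 1)
    (hΦT : p3 T * x2 T - p2 T * x3 T = 0)
    (hPtilde : ¬(p1 T - (p1 T * x1 T + p2 T * x2 T + p3 T * x3 T) * x1 T = 0 ∧
                 p2 T - (p1 T * x1 T + p2 T * x2 T + p3 T * x3 T) * x2 T = 0 ∧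
                 p3 T - (p1 T * x1 T + p2 T * x2 T + p3 T * x3 T) * x3 T = 0))
    (hmax : ∀ t ∈ Icc (T - ε0) T, p3 t * x2 t - p2 t * x3 t ≠ 0 →
      u t = Real.sign (p3 t * x2 t - p2 t * x3 t)) :
    Δ * (x1 T * p3 T - x3 T * p1 T) = -Δ * p1 T ∧
    -Δ * p1 T ≠ 0 ∧
    ∃ ε : ℝ, 0 < ε ∧ ε ≤ ε0 ∧
      ((∀ t ∈ Ico (T - ε) T, 0 < p3 t * x2 t - p2 t * x3 t ∧ u t = 1) ∨
       (∀ t ∈ Ico (T - ε) T, p3 t * x2 t - p2 t * x3 t < 0 ∧ u t = -1)) :=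
  final_arc_is_bang_when_reduced_adjoint_nonzero_general Δ hΔ T ε0 hε0 u x1 x2 x3 p1 p2 p3 hx2 hx3
    hp2 hp3 hXT hΦT hPtilde hmax
end

section
/- Let (X, P) solve the extremal system and let t0 be a time at which Φ(t0) = 0, x2(t0) ≠ 0, and the normal Pontryagin Hamiltonian vanishes: H_P(t0) = Δ(x1 p2 − x2 p1)(t0) + u(t0) Φ(t0) − x1(t0)²/2 = 0. Then p3(t0) = (x3(t0)/x2(t0)) p2(t0), the quantity Δ(x1 p2 − x2 p1)(t0) equals x1(t0)²/2, and the derivative of the switching function satisfies Φ̇(t0) = x3(t0) x1(t0)² / (2 x2(t0)). -/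
open Set

/-! Along the extremal system the control drops out of the derivative of the switching function:
Φ̇ = Δ (x1 p3 − x3 p1). At a zero of Φ with x2 ≠ 0 the adjoint component p3 is (x3/x2) p2, so
Φ̇ = (x3/x2) Δ (x1 p2 − x2 p1), and a vanishing Hamiltonian with Φ = 0 gives Δ (x1 p2 − x2 p1) = x1²/2. -/

theorem hasDerivAt_switching_function {Δ t v x1 p1 : ℝ} {x2 x3 p2 p3 : ℝ → ℝ}
    (hx2 : HasDerivAt x2 (Δ * x1 - v * x3 t) t) (hx3 : HasDerivAt x3 (v * x2 t) t)
    (hp2 : HasDerivAt p2 (Δ * p1 - v * p3 t) t) (hp3 : HasDerivAt p3 (v * p2 t) t) :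
    HasDerivAt (fun s => p3 s * x2 s - p2 s * x3 s) (Δ * (x1 * p3 t - x3 t * p1)) t := by
  refine ((hp3.mul hx2).sub (hp2.mul hx3)).congr_deriv ?_
  ring

theorem eq_div_mul_of_mul_sub_mul_eq_zero {a b c d : ℝ}
    (h : a * b - c * d = 0) (hb : b ≠ 0) : a = (d / b) * c := by
  field_simp
  linarith

theorem switching_deriv_at_switching_time_general
    (Δ : ℝ) (a b : ℝ)
    (u x1 x2 x3 p1 p2 p3 : ℝ → ℝ)
    (hx2 : ∀ t ∈ Ioo a b, HasDerivAt x2 (Δ * x1 t - u t * x3 t) t)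
    (hx3 : ∀ t ∈ Ioo a b, HasDerivAt x3 (u t * x2 t) t)
    (hp2 : ∀ t ∈ Ioo a b, HasDerivAt p2 (Δ * p1 t - u t * p3 t) t)
    (hp3 : ∀ t ∈ Ioo a b, HasDerivAt p3 (u t * p2 t) t)
    (t0 : ℝ) (ht0 : t0 ∈ Ioo a b)
    (hΦ : p3 t0 * x2 t0 - p2 t0 * x3 t0 = 0)
    (hx2t0 : x2 t0 ≠ 0)
    (hH : Δ * (x1 t0 * p2 t0 - x2 t0 * p1 t0)
        + u t0 * (p3 t0 * x2 t0 - p2 t0 * x3 t0) - x1 t0 ^ 2 / 2 = 0) :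
    p3 t0 = (x3 t0 / x2 t0) * p2 t0 ∧
    Δ * (x1 t0 * p2 t0 - x2 t0 * p1 t0) = x1 t0 ^ 2 / 2 ∧
    HasDerivAt (fun s => p3 s * x2 s - p2 s * x3 s)
      (x3 t0 * x1 t0 ^ 2 / (2 * x2 t0)) t0 := by
  have hp3t0 := eq_div_mul_of_mul_sub_mul_eq_zero hΦ hx2t0
  have hHam : Δ * (x1 t0 * p2 t0 - x2 t0 * p1 t0) = x1 t0 ^ 2 / 2 := by
    rw [hΦ, mul_zero, add_zero, sub_eq_zero] at hH
    exact hH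
  refine ⟨hp3t0, hHam, ?_⟩
  have hderiv := hasDerivAt_switching_function (hx2 t0 ht0) (hx3 t0 ht0) (hp2 t0 ht0) (hp3 t0 ht0)
  convert hderiv using 1
  rw [hp3t0]
  field_simp
  linear_combination (-2) * x3 t0 * hHam

/-- If at a time t0 one has Φ(t0) = 0, x2(t0) ≠ 0 and the normal
Pontryagin Hamiltonian H_P = Δ(x1 p2 − x2 p1) + u Φ − x1²/2 vanishes at t0, then
p3(t0) = (x3(t0)/x2(t0)) p2(t0), Δ(x1 p2 − x2 p1)(t0) = x1(t0)²/2, and the switching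
function has derivative Φ̇(t0) = x3(t0) x1(t0)² / (2 x2(t0)). -/
theorem switching_deriv_at_switching_time
    (Δ : ℝ) (hΔ : Δ ≠ 0) (a b : ℝ) (hab : a < b)
    (u x1 x2 x3 p1 p2 p3 : ℝ → ℝ)
    (hu : ContinuousOn u (Ioo a b))
    (hx1 : ∀ t ∈ Ioo a b, HasDerivAt x1 (-Δ * x2 t) t)
    (hx2 : ∀ t ∈ Ioo a b, HasDerivAt x2 (Δ * x1 t - u t * x3 t) t)
    (hx3 : ∀ t ∈ Ioo a b, HasDerivAt x3 (u t * x2 t) t)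
    (hp1 : ∀ t ∈ Ioo a b, HasDerivAt p1 (-Δ * p2 t + x1 t) t)
    (hp2 : ∀ t ∈ Ioo a b, HasDerivAt p2 (Δ * p1 t - u t * p3 t) t)
    (hp3 : ∀ t ∈ Ioo a b, HasDerivAt p3 (u t * p2 t) t)
    (t0 : ℝ) (ht0 : t0 ∈ Ioo a b)
    (hΦ : p3 t0 * x2 t0 - p2 t0 * x3 t0 = 0)
    (hx2t0 : x2 t0 ≠ 0)
    (hH : Δ * (x1 t0 * p2 t0 - x2 t0 * p1 t0)
        + u t0 * (p3 t0 * x2 t0 - p2 t0 * x3 t0) - x1 t0 ^ 2 / 2 = 0) :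
    p3 t0 = (x3 t0 / x2 t0) * p2 t0 ∧
    Δ * (x1 t0 * p2 t0 - x2 t0 * p1 t0) = x1 t0 ^ 2 / 2 ∧
    HasDerivAt (fun s => p3 s * x2 s - p2 s * x3 s)
      (x3 t0 * x1 t0 ^ 2 / (2 * x2 t0)) t0 :=
  switching_deriv_at_switching_time_general Δ a b u x1 x2 x3 p1 p2 p3 hx2 hx3 hp2 hp3 t0 ht0 hΦ
    hx2t0 hH
end

section
/- Let (X, P) solve the extremal system with the normal Pontryagin Hamiltonian identically zero, and let t0 be a switching time, i.e. Φ(t0) = 0. If x1(t0) ≠ 0 and x2(t0) x3(t0) > 0 then Φ̇(t0) > 0 (so the control can only switch from −1 to +1 there), while if x1(t0) ≠ 0 and x2(t0) x3(t0) < 0 then Φ̇(t0) < 0 (so the control can only switch from +1 to −1 there). -/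
open Set

/-- Along an extremal with vanishing normal Pontryagin Hamiltonian, at a
switching time t0 (Φ(t0) = 0) with x1(t0) ≠ 0: if x2(t0) x3(t0) > 0 then
Φ̇(t0) = Δ(x1 p3 − x3 p1)(t0) > 0 (switchings only from −1 to +1), while if
x2(t0) x3(t0) < 0 then Φ̇(t0) < 0 (switchings only from +1 to −1). -/
theorem switching_direction
    (Δ : ℝ) (hΔ : Δ ≠ 0) (a b : ℝ) (hab : a < b)
    (u x1 x2 x3 p1 p2 p3 : ℝ → ℝ)
    (hu : ContinuousOn u (Ioo a b))
    (hx1 : ∀ t ∈ Ioo a b, HasDerivAt x1 (-Δ * x2 t) t)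
    (hx2 : ∀ t ∈ Ioo a b, HasDerivAt x2 (Δ * x1 t - u t * x3 t) t)
    (hx3 : ∀ t ∈ Ioo a b, HasDerivAt x3 (u t * x2 t) t)
    (hp1 : ∀ t ∈ Ioo a b, HasDerivAt p1 (-Δ * p2 t + x1 t) t)
    (hp2 : ∀ t ∈ Ioo a b, HasDerivAt p2 (Δ * p1 t - u t * p3 t) t)
    (hp3 : ∀ t ∈ Ioo a b, HasDerivAt p3 (u t * p2 t) t)
    (hH : ∀ t ∈ Ioo a b,
      Δ * (x1 t * p2 t - x2 t * p1 t) + u t * (p3 t * x2 t - p2 t * x3 t)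
        - x1 t ^ 2 / 2 = 0)
    (t0 : ℝ) (ht0 : t0 ∈ Ioo a b)
    (hΦ : p3 t0 * x2 t0 - p2 t0 * x3 t0 = 0) :
    (x1 t0 ≠ 0 → x2 t0 * x3 t0 > 0 → Δ * (x1 t0 * p3 t0 - x3 t0 * p1 t0) > 0) ∧
    (x1 t0 ≠ 0 → x2 t0 * x3 t0 < 0 → Δ * (x1 t0 * p3 t0 - x3 t0 * p1 t0) < 0) := by
  have hkey : Δ * (x1 t0 * p3 t0 - x3 t0 * p1 t0) * (x2 t0 * x3 t0)
      = x3 t0 ^ 2 * x1 t0 ^ 2 / 2 := by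
    linear_combination (x3 t0 ^ 2) * (hH t0 ht0)
      + (Δ * x1 t0 * x3 t0 - u t0 * x3 t0 ^ 2) * hΦ
  constructor <;> intro h1 h2
  · have hx3ne : x3 t0 ≠ 0 := fun h => by simp [h] at h2
    nlinarith [sq_pos_of_ne_zero h1, sq_pos_of_ne_zero hx3ne]
  · have hx3ne : x3 t0 ≠ 0 := fun h => by simp [h] at h2
    nlinarith [sq_pos_of_ne_zero h1, sq_pos_of_ne_zero hx3ne]
end

section
/- Let (X, P) solve the extremal system on a bang arc (u constantly +1 or −1) with the normal Pontryagin Hamiltonian identically zero, and let t0 be a time at which Φ(t0) = 0, x1(t0) = 0, and x2(t0) ≠ 0. Then p1(t0) = 0, Φ̇(t0) = 0, Φ̈(t0) = 0, and Φ⁽³⁾(t0) = Δ² x2(t0) x3(t0). Consequently, also at points with x1 = 0, switchings on the set {x2 x3 > 0} can only occur from −1 to +1 and switchings on {x2 x3 < 0} only from +1 to −1. -/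
/-!
At `t0` the Hamiltonian reduces to `-Δ x2 p1 = 0`, whence `p1 = 0`. Along the extremal the
control drops out of `Φ̇ = Δ (p3 x1 - p1 x3)`, and on a bang arc `Φ̈` and `Φ⃛` are explicit
polynomials in the state and adjoint. At `t0` every term containing `x1`, `p1` or `Φ` vanishes,
leaving `Φ̇ = Φ̈ = 0` and `Φ⃛ = Δ² x2 x3`, whose sign is that of `x2 x3`.
-/

open Set

theorem p1_eq_zero_of_hamiltonian_eq_zero {Δ c x1 x2 x3 p1 p2 p3 : ℝ} (hΔ : Δ ≠ 0)
    (hx1 : x1 = 0) (hx2 : x2 ≠ 0) (hΦ : p3 * x2 - p2 * x3 = 0)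
    (hH : Δ * (x1 * p2 - x2 * p1) + c * (p3 * x2 - p2 * x3) - x1 ^ 2 / 2 = 0) :
    p1 = 0 := by
  have h : Δ * x2 * p1 = 0 := by
    rw [hx1, hΦ] at hH
    linarith
  simpa [hΔ, hx2] using h

section ExtremalDerivatives

variable {Δ : ℝ} {x1 x2 x3 p1 p2 p3 : ℝ → ℝ} {t : ℝ}

theorem hasDerivAt_switching {u : ℝ}
    (hx2 : HasDerivAt x2 (Δ * x1 t - u * x3 t) t) (hx3 : HasDerivAt x3 (u * x2 t) t)
    (hp2 : HasDerivAt p2 (Δ * p1 t - u * p3 t) t) (hp3 : HasDerivAt p3 (u * p2 t) t) :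
    HasDerivAt (fun s => p3 s * x2 s - p2 s * x3 s) (Δ * (p3 t * x1 t - p1 t * x3 t)) t :=
  ((hp3.mul hx2).sub (hp2.mul hx3)).congr_deriv (by ring)

theorem hasDerivAt_switching_deriv {u : ℝ}
    (hx1 : HasDerivAt x1 (-Δ * x2 t) t) (hx3 : HasDerivAt x3 (u * x2 t) t)
    (hp1 : HasDerivAt p1 (-Δ * p2 t + x1 t) t) (hp3 : HasDerivAt p3 (u * p2 t) t) :
    HasDerivAt (fun s => Δ * (p3 s * x1 s - p1 s * x3 s))
      (Δ * (u * (p2 t * x1 t - p1 t * x2 t) - Δ * (p3 t * x2 t - p2 t * x3 t)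
        - x1 t * x3 t)) t :=
  (((hp3.mul hx1).sub (hp1.mul hx3)).const_mul Δ).congr_deriv (by ring)

theorem hasDerivAt_switching_deriv_deriv {c : ℝ}
    (hx1 : HasDerivAt x1 (-Δ * x2 t) t) (hx2 : HasDerivAt x2 (Δ * x1 t - c * x3 t) t)
    (hx3 : HasDerivAt x3 (c * x2 t) t) (hp1 : HasDerivAt p1 (-Δ * p2 t + x1 t) t)
    (hp2 : HasDerivAt p2 (Δ * p1 t - c * p3 t) t) (hp3 : HasDerivAt p3 (c * p2 t) t) :
    HasDerivAt (fun s => Δ * (c * (p2 s * x1 s - p1 s * x2 s)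
        - Δ * (p3 s * x2 s - p2 s * x3 s) - x1 s * x3 s))
      (-(Δ ^ 2 + c ^ 2) * (Δ * (p3 t * x1 t - p1 t * x3 t)) + Δ ^ 2 * x2 t * x3 t
        - 2 * c * Δ * x1 t * x2 t) t := by
  have hΦ := hasDerivAt_switching hx2 hx3 hp2 hp3
  exact (((((hp2.mul hx1).sub (hp1.mul hx2)).const_mul c).sub (hΦ.const_mul Δ)).sub
    (hx1.mul hx3)).const_mul Δ |>.congr_deriv (by ring)

end ExtremalDerivatives

theorem third_order_switching_direction_general
    (Δ : ℝ) (hΔ : Δ ≠ 0) (a b : ℝ)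
    (c : ℝ)
    (x1 x2 x3 p1 p2 p3 : ℝ → ℝ)
    (hx1 : ∀ t ∈ Ioo a b, HasDerivAt x1 (-Δ * x2 t) t)
    (hx2 : ∀ t ∈ Ioo a b, HasDerivAt x2 (Δ * x1 t - c * x3 t) t)
    (hx3 : ∀ t ∈ Ioo a b, HasDerivAt x3 (c * x2 t) t)
    (hp1 : ∀ t ∈ Ioo a b, HasDerivAt p1 (-Δ * p2 t + x1 t) t)
    (hp2 : ∀ t ∈ Ioo a b, HasDerivAt p2 (Δ * p1 t - c * p3 t) t)
    (hp3 : ∀ t ∈ Ioo a b, HasDerivAt p3 (c * p2 t) t)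
    (hH : ∀ t ∈ Ioo a b,
      Δ * (x1 t * p2 t - x2 t * p1 t) + c * (p3 t * x2 t - p2 t * x3 t)
        - x1 t ^ 2 / 2 = 0)
    (t0 : ℝ) (ht0 : t0 ∈ Ioo a b)
    (hΦ : p3 t0 * x2 t0 - p2 t0 * x3 t0 = 0)
    (hx1t0 : x1 t0 = 0) (hx2t0 : x2 t0 ≠ 0) :
    p1 t0 = 0 ∧
    ∃ Φ1 Φ2 Φ3 : ℝ → ℝ,
      (∀ t ∈ Ioo a b,
        HasDerivAt (fun s => p3 s * x2 s - p2 s * x3 s) (Φ1 t) t) ∧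
      (∀ t ∈ Ioo a b, HasDerivAt Φ1 (Φ2 t) t) ∧
      (∀ t ∈ Ioo a b, HasDerivAt Φ2 (Φ3 t) t) ∧
      Φ1 t0 = 0 ∧ Φ2 t0 = 0 ∧ Φ3 t0 = Δ ^ 2 * x2 t0 * x3 t0 ∧
      (x2 t0 * x3 t0 > 0 → Φ3 t0 > 0) ∧
      (x2 t0 * x3 t0 < 0 → Φ3 t0 < 0) := by
  have hp1t0 : p1 t0 = 0 := p1_eq_zero_of_hamiltonian_eq_zero hΔ hx1t0 hx2t0 hΦ (hH t0 ht0)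
  have hΔsq : 0 < Δ ^ 2 := sq_pos_of_ne_zero hΔ
  refine ⟨hp1t0, _, _, _,
    fun t ht => hasDerivAt_switching (hx2 t ht) (hx3 t ht) (hp2 t ht) (hp3 t ht),
    fun t ht => hasDerivAt_switching_deriv (hx1 t ht) (hx3 t ht) (hp1 t ht) (hp3 t ht),
    fun t ht => hasDerivAt_switching_deriv_deriv (hx1 t ht) (hx2 t ht) (hx3 t ht)
      (hp1 t ht) (hp2 t ht) (hp3 t ht), ?_, ?_, ?_, fun h => ?_, fun h => ?_⟩
  all_goals simp only [hx1t0, hp1t0, hΦ]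
  · ring
  · ring
  · ring
  · nlinarith [mul_pos hΔsq h]
  · nlinarith [mul_neg_of_pos_of_neg hΔsq h]

/-- On a bang arc (control constantly c = ±1) with vanishing normal
Pontryagin Hamiltonian, at a time t0 with Φ(t0) = 0, x1(t0) = 0 and x2(t0) ≠ 0 one has
p1(t0) = 0, Φ̇(t0) = 0, Φ̈(t0) = 0, and Φ⁽³⁾(t0) = Δ² x2(t0) x3(t0).  Consequently,
also at points with x1 = 0, switchings on {x2 x3 > 0} can only be from −1 to +1 and on
{x2 x3 < 0} only from +1 to −1. -/
theorem third_order_switching_direction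
    (Δ : ℝ) (hΔ : Δ ≠ 0) (a b : ℝ) (hab : a < b)
    (c : ℝ) (hc : c = 1 ∨ c = -1)
    (x1 x2 x3 p1 p2 p3 : ℝ → ℝ)
    (hx1 : ∀ t ∈ Ioo a b, HasDerivAt x1 (-Δ * x2 t) t)
    (hx2 : ∀ t ∈ Ioo a b, HasDerivAt x2 (Δ * x1 t - c * x3 t) t)
    (hx3 : ∀ t ∈ Ioo a b, HasDerivAt x3 (c * x2 t) t)
    (hp1 : ∀ t ∈ Ioo a b, HasDerivAt p1 (-Δ * p2 t + x1 t) t)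
    (hp2 : ∀ t ∈ Ioo a b, HasDerivAt p2 (Δ * p1 t - c * p3 t) t)
    (hp3 : ∀ t ∈ Ioo a b, HasDerivAt p3 (c * p2 t) t)
    (hH : ∀ t ∈ Ioo a b,
      Δ * (x1 t * p2 t - x2 t * p1 t) + c * (p3 t * x2 t - p2 t * x3 t)
        - x1 t ^ 2 / 2 = 0)
    (t0 : ℝ) (ht0 : t0 ∈ Ioo a b)
    (hΦ : p3 t0 * x2 t0 - p2 t0 * x3 t0 = 0)
    (hx1t0 : x1 t0 = 0) (hx2t0 : x2 t0 ≠ 0) :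
    p1 t0 = 0 ∧
    ∃ Φ1 Φ2 Φ3 : ℝ → ℝ,
      (∀ t ∈ Ioo a b,
        HasDerivAt (fun s => p3 s * x2 s - p2 s * x3 s) (Φ1 t) t) ∧
      (∀ t ∈ Ioo a b, HasDerivAt Φ1 (Φ2 t) t) ∧
      (∀ t ∈ Ioo a b, HasDerivAt Φ2 (Φ3 t) t) ∧
      Φ1 t0 = 0 ∧ Φ2 t0 = 0 ∧ Φ3 t0 = Δ ^ 2 * x2 t0 * x3 t0 ∧
      (x2 t0 * x3 t0 > 0 → Φ3 t0 > 0) ∧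
      (x2 t0 * x3 t0 < 0 → Φ3 t0 < 0) :=
  third_order_switching_direction_general Δ hΔ a b c x1 x2 x3 p1 p2 p3 hx1 hx2 hx3 hp1 hp2 hp3 hH t0
    ht0 hΦ hx1t0 hx2t0
end

section
/- Let ξ = √((√33 − 1)/24), α = √((1 + 2ξ)/(1 − 2ξ)), and y₀ > 0. Let (x, y) solve ẋ = y, ẏ = −1 with initial condition (x(0), y(0)) = (−ξ y₀², y₀). Then at time t₁ = (1 + 1/α) y₀ one has y(t₁) = −y₀/α and x(t₁) = ξ y₀²/α² = ξ y(t₁)²; that is, starting from the point (−ξ y₀², y₀) of the switching curve x = −ξ sign(y) y², the bang arc with u = −1 reaches the switching curve again at the scaled point with ratios x(t₁)/x(0) = −1/α² and y(t₁)/y(0) = −1/α. -/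
/-!
Along the bang arc `y t = y₀ - t` and `x t = -ξ y₀² + y₀ t - t² / 2`. Writing `β = 1 / α`, at
`t₁ = (1 + β) y₀` this gives `x t₁ = y₀² ((1 - β²) / 2 - ξ)`, which equals `ξ β² y₀²` exactly
because `α² (1 - 2ξ) = 1 + 2ξ`.
-/

theorem eq_of_hasDerivAt_eq {f g f' : ℝ → ℝ} (hf : ∀ t, HasDerivAt f (f' t) t)
    (hg : ∀ t, HasDerivAt g (f' t) t) (h0 : f 0 = g 0) : f = g :=
  eq_of_fderiv_eq (fun t => (hf t).differentiableAt) (fun t => (hg t).differentiableAt)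
    (fun t => by rw [(hf t).hasFDerivAt.fderiv, (hg t).hasFDerivAt.fderiv]) 0 h0

theorem eq_add_mul_of_hasDerivAt_const {y : ℝ → ℝ} {u : ℝ} (hy : ∀ t, HasDerivAt y u t) (t : ℝ) :
    y t = y 0 + u * t := by
  have hlin : ∀ s, HasDerivAt (fun s => y 0 + u * s) u s := fun s => by
    simpa using ((hasDerivAt_id s).const_mul u).const_add (y 0)
  exact congrFun (eq_of_hasDerivAt_eq hy hlin (by simp)) t

theorem eq_add_mul_add_sq_of_hasDerivAt {x y : ℝ → ℝ} {u : ℝ}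
    (hx : ∀ t, HasDerivAt x (y t) t) (hy : ∀ t, HasDerivAt y u t) (t : ℝ) :
    x t = x 0 + y 0 * t + u * t ^ 2 / 2 := by
  have hquad : ∀ s, HasDerivAt (fun s => x 0 + y 0 * s + u * s ^ 2 / 2) (y s) s := fun s => by
    rw [eq_add_mul_of_hasDerivAt_const hy s]
    refine ((((hasDerivAt_id' s).const_mul (y 0)).const_add (x 0)).add
      (((hasDerivAt_pow 2 s).const_mul u).div_const 2)).congr_deriv ?_
    ring
  exact congrFun (eq_of_hasDerivAt_eq hx hquad (by simp)) t

theorem sqrt_fuller_pos : 0 < √((√33 - 1) / 24) := by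
  have : (1 : ℝ) < √33 := by rw [Real.lt_sqrt zero_le_one]; norm_num
  positivity

theorem sqrt_fuller_lt_half : √((√33 - 1) / 24) < 1 / 2 := by
  have : √33 < 7 := by rw [Real.sqrt_lt' (by norm_num)]; norm_num
  rw [Real.sqrt_lt' (by norm_num)]
  linarith

theorem sq_mul_sub_eq_of_eq_sqrt {ξ α : ℝ} (hξ : |ξ| < 1 / 2)
    (hα : α = √((1 + 2 * ξ) / (1 - 2 * ξ))) : α ^ 2 * (1 - 2 * ξ) = 1 + 2 * ξ := by
  obtain ⟨hlo, hhi⟩ := abs_lt.1 hξ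
  have hden : 1 - 2 * ξ ≠ 0 := by linarith
  rw [hα, Real.sq_sqrt (div_nonneg (by linarith) (by linarith)), div_mul_cancel₀ _ hden]

theorem bang_arc_position_eq {ξ α y0 : ℝ} (hα : α ≠ 0) (hαξ : α ^ 2 * (1 - 2 * ξ) = 1 + 2 * ξ) :
    -ξ * y0 ^ 2 + y0 * ((1 + 1 / α) * y0) + (-1) * ((1 + 1 / α) * y0) ^ 2 / 2
      = ξ * y0 ^ 2 / α ^ 2 := by
  field_simp
  linear_combination y0 ^ 2 * hαξ

/-- For the Fuller model, let ξ = √((√33 − 1)/24),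
α = √((1 + 2ξ)/(1 − 2ξ)), y₀ > 0, and let (x, y) solve ẋ = y, ẏ = −1 with
(x(0), y(0)) = (−ξ y₀², y₀).  Then at t₁ = (1 + 1/α) y₀ one has y(t₁) = −y₀/α and
x(t₁) = ξ y₀²/α² = ξ y(t₁)²: the bang arc with u = −1 starting on the switching curve
reaches it again with scaling ratios x(t₁)/x(0) = −1/α² and y(t₁)/y(0) = −1/α. -/
theorem fuller_bang_arc_selfsimilar
    (ξ α y0 : ℝ)
    (hξ : ξ = Real.sqrt ((Real.sqrt 33 - 1) / 24))
    (hα : α = Real.sqrt ((1 + 2 * ξ) / (1 - 2 * ξ)))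
    (hy0 : 0 < y0)
    (x y : ℝ → ℝ)
    (hx : ∀ t, HasDerivAt x (y t) t)
    (hy : ∀ t, HasDerivAt y (-1) t)
    (hx0 : x 0 = -ξ * y0 ^ 2)
    (hy0' : y 0 = y0) :
    y ((1 + 1 / α) * y0) = -y0 / α ∧
    x ((1 + 1 / α) * y0) = ξ * y0 ^ 2 / α ^ 2 ∧
    x ((1 + 1 / α) * y0) = ξ * (y ((1 + 1 / α) * y0)) ^ 2 ∧
    x ((1 + 1 / α) * y0) / x 0 = -(1 / α ^ 2) ∧
    y ((1 + 1 / α) * y0) / y 0 = -(1 / α) := by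
  have hξ_pos : 0 < ξ := hξ ▸ sqrt_fuller_pos
  have hξ_abs : |ξ| < 1 / 2 := abs_lt.2 ⟨by linarith, hξ ▸ sqrt_fuller_lt_half⟩
  have hα_ne : α ≠ 0 := by
    rw [hα]
    exact (Real.sqrt_pos.2 (div_pos (by linarith) (by linarith [abs_lt.1 hξ_abs]))).ne'
  have hαξ := sq_mul_sub_eq_of_eq_sqrt hξ_abs hα
  have hy1 : y ((1 + 1 / α) * y0) = -y0 / α := by
    rw [eq_add_mul_of_hasDerivAt_const hy, hy0']
    field_simp
    ring
  have hx1 : x ((1 + 1 / α) * y0) = ξ * y0 ^ 2 / α ^ 2 := by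
    rw [eq_add_mul_add_sq_of_hasDerivAt hx hy, hx0, hy0']
    exact bang_arc_position_eq hα_ne hαξ
  refine ⟨hy1, hx1, ?_, ?_, ?_⟩
  · rw [hx1, hy1]
    ring
  · rw [hx1, hx0]
    field_simp
  · rw [hy1, hy0']
    field_simp
end

section
/- Let ξ = √((√33 − 1)/24), α = √((1 + 2ξ)/(1 − 2ξ)), y₀ > 0, and set t_f = ((1 + α)/(α − 1)) y₀ and t_k = t_f (1 − α^{−k}) for k ∈ ℕ. Define (x, y) : [0, t_f) → ℝ² as the continuous trajectory which on each interval [t_k, t_{k+1}] solves ẋ = y, ẏ = (−1)^{k+1}, with initial condition (x(0), y(0)) = (−ξ y₀², y₀). Then for every k one has y(t_k) = (−1/α)^k y₀ and x(t_k) = −ξ sign(y(t_k)) y(t_k)² (so every t_k is a switching point lying on the switching curve), the switching times satisfy t_f − t_{k+1} = (t_f − t_k)/α, and (x(t), y(t)) → (0, 0) as t → t_f⁻; hence the trajectory extended by (0,0) at t_f reaches the origin in the finite time t_f = ((1 + α)/(α − 1)) y₀ after infinitely many control switchings accumulating at t_f. -/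
open Set Filter Topology

/-- Auxiliary uniqueness lemma: two functions with the same derivative on `Icc a b`
agreeing at `a` agree on `Icc a b`. -/
lemma fuller_aux_eq_on_Icc {f g d : ℝ → ℝ} {a b : ℝ}
    (hf : ∀ t ∈ Icc a b, HasDerivWithinAt f (d t) (Icc a b) t)
    (hg : ∀ t ∈ Icc a b, HasDerivWithinAt g (d t) (Icc a b) t)
    (h0 : f a = g a) : ∀ t ∈ Icc a b, f t = g t := by
  apply eq_of_has_deriv_right_eq (f' := d)
  · intro u hu
    exact (hf u (Ico_subset_Icc_self hu)).mono_of_mem_nhdsWithin (Icc_mem_nhdsGE_of_mem hu)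
  · intro u hu
    exact (hg u (Ico_subset_Icc_self hu)).mono_of_mem_nhdsWithin (Icc_mem_nhdsGE_of_mem hu)
  · exact fun u hu => (hf u hu).continuousWithinAt
  · exact fun u hu => (hg u hu).continuousWithinAt
  · exact h0

set_option maxHeartbeats 1000000 in
/-- Chattering trajectory of the Fuller model.  With
ξ = √((√33 − 1)/24), α = √((1 + 2ξ)/(1 − 2ξ)), y₀ > 0, t_f = ((1 + α)/(α − 1)) y₀ and
t_k = t_f (1 − α^{−k}), the continuous trajectory solving ẋ = y, ẏ = (−1)^{k+1} on each
[t_k, t_{k+1}] with (x(0), y(0)) = (−ξ y₀², y₀) satisfies y(t_k) = (−1/α)^k y₀ and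
x(t_k) = −ξ sign(y(t_k)) y(t_k)² (each t_k is a switching point on the switching curve),
t_f − t_{k+1} = (t_f − t_k)/α, and (x(t), y(t)) → (0, 0) as t → t_f⁻; the trajectory
reaches the origin in the finite time t_f after infinitely many switchings accumulating
at t_f. -/
theorem fuller_chattering_trajectory
    (ξ α y0 tf : ℝ) (tk : ℕ → ℝ)
    (hξ : ξ = Real.sqrt ((Real.sqrt 33 - 1) / 24))
    (hα : α = Real.sqrt ((1 + 2 * ξ) / (1 - 2 * ξ)))
    (hy0 : 0 < y0)
    (htf : tf = ((1 + α) / (α - 1)) * y0)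
    (htk : ∀ k : ℕ, tk k = tf * (1 - (1 / α) ^ k))
    (x y : ℝ → ℝ)
    (hx0 : x 0 = -ξ * y0 ^ 2)
    (hy0' : y 0 = y0)
    (hx : ∀ k : ℕ, ∀ t ∈ Icc (tk k) (tk (k + 1)),
      HasDerivWithinAt x (y t) (Icc (tk k) (tk (k + 1))) t)
    (hy : ∀ k : ℕ, ∀ t ∈ Icc (tk k) (tk (k + 1)),
      HasDerivWithinAt y ((-1 : ℝ) ^ (k + 1)) (Icc (tk k) (tk (k + 1))) t) :
    (∀ k : ℕ, y (tk k) = (-(1 / α)) ^ k * y0) ∧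
    (∀ k : ℕ, x (tk k) = -ξ * Real.sign (y (tk k)) * (y (tk k)) ^ 2) ∧
    (∀ k : ℕ, tf - tk (k + 1) = (tf - tk k) / α) ∧
    Tendsto (fun t => (x t, y t)) (nhdsWithin tf (Iio tf)) (nhds ((0 : ℝ), (0 : ℝ))) := by
  -- basic facts about the constants
  have h33lb : (1:ℝ) < Real.sqrt 33 := by
    have : Real.sqrt 1 < Real.sqrt 33 := Real.sqrt_lt_sqrt (by norm_num) (by norm_num)
    simpa using this
  have h33ub : Real.sqrt 33 < 7 := by
    have : Real.sqrt 33 < Real.sqrt 49 := Real.sqrt_lt_sqrt (by norm_num) (by norm_num)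
    simpa [show Real.sqrt 49 = 7 by
      rw [show (49:ℝ) = 7^2 by norm_num, Real.sqrt_sq (by norm_num : (0:ℝ) ≤ 7)]] using this
  have hξ0 : 0 < ξ := by
    rw [hξ]; exact Real.sqrt_pos.mpr (by linarith)
  have hξsq : ξ ^ 2 = (Real.sqrt 33 - 1) / 24 := by
    rw [hξ]; exact Real.sq_sqrt (by linarith)
  have hξhalf : 2 * ξ < 1 := by nlinarith [hξsq, hξ0]
  have hαsq : α ^ 2 = (1 + 2*ξ) / (1 - 2*ξ) := by
    rw [hα]; exact Real.sq_sqrt (div_nonneg (by linarith) (by linarith))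
  have hα1 : 1 < α := by
    rw [hα]
    have h1 : (1:ℝ) < (1 + 2*ξ) / (1 - 2*ξ) := by
      rw [lt_div_iff₀ (by linarith)]; linarith
    have : Real.sqrt 1 < Real.sqrt ((1 + 2*ξ) / (1 - 2*ξ)) :=
      Real.sqrt_lt_sqrt (by norm_num) h1
    simpa using this
  have hα0 : 0 < α := by linarith
  set β : ℝ := 1 / α with hβdef
  have hβ0 : 0 < β := by positivity
  have hβ1 : β < 1 := by rw [hβdef, div_lt_one hα0]; exact hα1
  have kxi : ξ * (1 + β ^ 2) = (1 - β ^ 2) / 2 := by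
    have hb2 : β ^ 2 = (1 - 2*ξ) / (1 + 2*ξ) := by
      rw [hβdef, div_pow, one_pow, hαsq, one_div_div]
    rw [hb2]
    field_simp
    ring
  have hαne : α ≠ 0 := ne_of_gt hα0
  have hα1ne : α - 1 ≠ 0 := sub_ne_zero.mpr (ne_of_gt hα1)
  have hαβ : α * β = 1 := by
    rw [hβdef]; field_simp
  have htfβ : tf * (1 - β) = (1 + β) * y0 := by
    have hv : (α - 1) * (α - 1)⁻¹ = 1 := mul_inv_cancel₀ hα1ne
    rw [htf]
    linear_combination (y0 * (1 + β)) * hv - (2 * y0 * (α - 1)⁻¹) * hαβ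
  have htfpos : 0 < tf := by
    rw [htf]
    exact mul_pos (div_pos (by linarith) (by linarith)) hy0
  have hdelta : ∀ k : ℕ, tk (k+1) - tk k = (1 + β) * β ^ k * y0 := by
    intro k
    rw [htk, htk, pow_succ]
    linear_combination (β ^ k) * htfβ
  have hmono : StrictMono tk := by
    apply strictMono_nat_of_lt_succ
    intro n
    have h1 := hdelta n
    have h2 : 0 < (1 + β) * β ^ n * y0 :=
      mul_pos (mul_pos (by linarith) (pow_pos hβ0 n)) hy0
    linarith
  have htk0 : tk 0 = 0 := by rw [htk]; simp
  have htkpos : ∀ k, 0 ≤ tk k := fun k => htk0 ▸ hmono.monotone (Nat.zero_le k)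
  -- explicit formulas on each interval
  have huniq : ∀ k : ℕ, ∀ t ∈ Icc (tk k) (tk (k+1)),
      y t = y (tk k) + (-1:ℝ)^(k+1) * (t - tk k) ∧
      x t = x (tk k) + y (tk k) * (t - tk k) + (-1:ℝ)^(k+1) * (t - tk k)^2 / 2 := by
    intro k
    have hyeq : ∀ t ∈ Icc (tk k) (tk (k+1)),
        y t = y (tk k) + (-1:ℝ)^(k+1) * (t - tk k) := by
      apply fuller_aux_eq_on_Icc (d := fun _ => (-1:ℝ)^(k+1)) (hy k)
      · intro t ht
        have : HasDerivAt (fun u => y (tk k) + (-1:ℝ)^(k+1) * (u - tk k)) ((-1:ℝ)^(k+1)) t := by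
          simpa using (((hasDerivAt_id t).sub_const (tk k)).const_mul ((-1:ℝ)^(k+1))).const_add
            (y (tk k))
        exact this.hasDerivWithinAt
      · simp
    have hxeq : ∀ t ∈ Icc (tk k) (tk (k+1)),
        x t = x (tk k) + y (tk k) * (t - tk k) + (-1:ℝ)^(k+1) * (t - tk k)^2 / 2 := by
      apply fuller_aux_eq_on_Icc (d := fun t => y (tk k) + (-1:ℝ)^(k+1) * (t - tk k))
      · intro t ht
        have := hx k t ht
        rwa [hyeq t ht] at this
      · intro t ht
        have h1 : HasDerivAt
            (fun u => x (tk k) + y (tk k) * (u - tk k) + (-1:ℝ)^(k+1) * (u - tk k)^2 / 2)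
            (y (tk k) * 1 + (-1:ℝ)^(k+1) * (2 * (t - tk k)^1 * 1) / 2) t := by
          exact ((((hasDerivAt_id t).sub_const (tk k)).const_mul (y (tk k))).const_add
            (x (tk k))).add (((((hasDerivAt_id t).sub_const (tk k)).pow 2).const_mul
            ((-1:ℝ)^(k+1))).div_const 2)
        have h2 : y (tk k) * 1 + (-1:ℝ)^(k+1) * (2 * (t - tk k)^1 * 1) / 2
            = y (tk k) + (-1:ℝ)^(k+1) * (t - tk k) := by ring
        rw [h2] at h1
        exact h1.hasDerivWithinAt
      · simp
    exact fun t ht => ⟨hyeq t ht, hxeq t ht⟩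
  -- endpoint values by induction
  have main : ∀ k : ℕ, y (tk k) = (-β) ^ k * y0 ∧
      x (tk k) = (-1:ℝ)^(k+1) * ξ * (β ^ k * y0)^2 := by
    intro k
    induction k with
    | zero =>
      rw [htk0]
      constructor
      · simpa using hy0'
      · rw [hx0]; ring
    | succ k ih =>
      have hmem : tk (k+1) ∈ Icc (tk k) (tk (k+1)) :=
        right_mem_Icc.mpr (hmono (Nat.lt_succ_self k)).le
      obtain ⟨hyf, hxf⟩ := huniq k _ hmem
      have hd := hdelta k
      constructor
      · rw [hyf, ih.1, hd]
        simp only [neg_pow β, pow_succ]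
        ring
      · rw [hxf, ih.1, ih.2, hd]
        simp only [neg_pow β, pow_succ]
        linear_combination (-((-1:ℝ)^k) * (β^k)^2 * y0^2) * kxi
  refine ⟨fun k => (main k).1, ?_, ?_, ?_⟩
  · -- switching curve
    intro k
    have hE : ((-1:ℝ)^k) * ((-1:ℝ)^k) = 1 := by
      rw [← pow_add]
      exact Even.neg_one_pow ⟨k, rfl⟩
    have hsign : Real.sign (y (tk k)) = (-1:ℝ)^k := by
      rw [(main k).1]
      rcases Nat.even_or_odd k with he | ho
      · rw [he.neg_pow, he.neg_one_pow]
        exact Real.sign_of_pos (mul_pos (pow_pos hβ0 k) hy0)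
      · rw [ho.neg_pow, ho.neg_one_pow]
        exact Real.sign_of_neg (by nlinarith [pow_pos hβ0 k])
    rw [(main k).2, hsign, (main k).1]
    simp only [neg_pow β, pow_succ]
    linear_combination (ξ * (-1:ℝ)^k * (β^k)^2 * y0^2) * hE
  · -- geometric decay of switching times
    intro k
    rw [htk, htk, pow_succ, eq_div_iff hαne]
    linear_combination (tf * β ^ k) * hαβ
  · -- convergence to the origin
    have hbound : ∀ k : ℕ, ∀ t ∈ Icc (tk k) (tk (k+1)),
        |x t| ≤ (5*y0^2) * β^k ∧ |y t| ≤ (3*y0) * β^k := by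
      intro k t ht
      obtain ⟨hyf, hxf⟩ := huniq k t ht
      have hts : 0 ≤ t - tk k := by linarith [ht.1]
      have htd : t - tk k ≤ (1+β) * (β^k * y0) := by
        have := hdelta k
        have h2 := ht.2
        linarith [mul_assoc (1+β) (β^k) y0]
      have hpk : (0:ℝ) < β^k := pow_pos hβ0 k
      have hpk1 : β^k ≤ 1 := pow_le_one₀ hβ0.le hβ1.le
      have hP : (0:ℝ) < β^k * y0 := mul_pos hpk hy0
      have habs : |(-1:ℝ)^(k+1)| = 1 := by
        rw [abs_pow, abs_neg, abs_one, one_pow]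
      have hyav : y (tk k) = -((-1:ℝ)^(k+1)) * (β^k * y0) := by
        rw [(main k).1, neg_pow β, pow_succ]; ring
      have hxav : x (tk k) = ((-1:ℝ)^(k+1)) * (ξ * (β^k * y0)^2) := by
        rw [(main k).2]; ring
      -- convenient facts for linarith
      have f1 : 0 ≤ (1 - β^k) * (β^k * (y0 * y0)) :=
        mul_nonneg (by linarith) (mul_nonneg hpk.le (mul_nonneg hy0.le hy0.le))
      have f2 : 0 ≤ (1 - β) * (β^k * y0) := mul_nonneg (by linarith) hP.le
      have f3 : 0 ≤ (1 - β) * (β^k * y0)^2 := mul_nonneg (by linarith) (sq_nonneg _)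
      have f4 : 0 ≤ (1 - β) * (β * (β^k * y0)^2) :=
        mul_nonneg (by linarith) (mul_nonneg hβ0.le (sq_nonneg _))
      have f5 : (t - tk k) * (t - tk k)
          ≤ ((1+β) * (β^k * y0)) * ((1+β) * (β^k * y0)) :=
        mul_self_le_mul_self hts htd
      have f6 : (β^k * y0) * (t - tk k) ≤ (β^k * y0) * ((1+β) * (β^k * y0)) :=
        mul_le_mul_of_nonneg_left htd hP.le
      have f7 : 0 ≤ (β^k * y0) * (t - tk k) := mul_nonneg hP.le hts
      have f8 : 0 ≤ (1 - 2*ξ) * (β^k * y0)^2 := mul_nonneg (by linarith) (sq_nonneg _)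
      have f9 : 0 ≤ ξ * (β^k * y0)^2 := mul_nonneg hξ0.le (sq_nonneg _)
      have f10 : 0 ≤ (t - tk k) * (t - tk k) := mul_nonneg hts hts
      constructor
      · have hxt : x t = ((-1:ℝ)^(k+1)) *
            (ξ * (β^k * y0)^2 - (β^k * y0) * (t - tk k) + (t - tk k)^2 / 2) := by
          rw [hxf, hxav, hyav]; ring
        rw [hxt, abs_mul, habs, one_mul, abs_le]
        constructor
        · linarith [f1, f3, f4, f5, f6, f7, f8, f9, f10]
        · linarith [f1, f3, f4, f5, f6, f7, f8, f9, f10]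
      · have hyt : y t = ((-1:ℝ)^(k+1)) * ((t - tk k) - (β^k * y0)) := by
          rw [hyf, hyav]; ring
        rw [hyt, abs_mul, habs, one_mul, abs_le]
        constructor
        · linarith [f1, f2, hP, hts, htd]
        · linarith [f1, f2, hP, hts, htd]
    have hlimpow : Tendsto (fun n : ℕ => β ^ n) atTop (𝓝 0) :=
      tendsto_pow_atTop_nhds_zero_of_lt_one hβ0.le hβ1
    have hlimtk : Tendsto tk atTop (𝓝 tf) := by
      have h1 : Tendsto (fun n : ℕ => tf * (1 - β ^ n)) atTop (𝓝 (tf * (1 - 0))) :=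
        (tendsto_const_nhds.sub hlimpow).const_mul tf
      have h2 : Tendsto (fun n : ℕ => tf * (1 - β ^ n)) atTop (𝓝 tf) := by
        simpa using h1
      exact h2.congr (fun n => (htk n).symm)
    set M : ℝ := 5*y0^2 + 3*y0 with hMdef
    have hM : 0 < M := by positivity
    rw [Metric.tendsto_nhdsWithin_nhds]
    intro ε hε
    obtain ⟨K, hK⟩ : ∃ K : ℕ, M * β ^ K < ε := by
      have h1 : Tendsto (fun n : ℕ => M * β ^ n) atTop (𝓝 (M * 0)) :=
        hlimpow.const_mul M
      rw [mul_zero] at h1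
      exact (h1.eventually (gt_mem_nhds hε)).exists
    have htfK : tk K < tf := by
      have h1 := htk K
      nlinarith [pow_pos hβ0 K]
    refine ⟨tf - tk K, by linarith, ?_⟩
    intro t ht hdist
    have htlt : t < tf := ht
    have htK : tk K < t := by
      rw [Real.dist_eq, abs_sub_comm, abs_of_pos (by linarith : 0 < tf - t)] at hdist
      linarith
    have ht0 : 0 ≤ t := le_trans (htkpos K) htK.le
    have hex : ∃ n : ℕ, t < tk n :=
      (hlimtk.eventually (eventually_gt_nhds htlt)).exists
    have hn := Nat.find_spec hex
    rcases hn0 : Nat.find hex with _ | m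
    · rw [hn0, htk0] at hn
      linarith
    · rw [hn0] at hn
      have h2 : ¬ t < tk m := Nat.find_min hex (by omega)
      push_neg at h2
      have hkK : K ≤ m := by
        by_contra h
        push_neg at h
        have : tk (m+1) ≤ tk K := hmono.monotone (by omega)
        linarith
      obtain ⟨hbx, hby⟩ := hbound m t ⟨h2, hn.le⟩
      have hmonk : β ^ m ≤ β ^ K := pow_le_pow_of_le_one hβ0.le hβ1.le hkK
      have hbig : M * β ^ m ≤ M * β ^ K := mul_le_mul_of_nonneg_left hmonk hM.le
      have hxfin : |x t| < ε := by
        have : (5*y0^2) * β^m ≤ M * β^m := by nlinarith [pow_pos hβ0 m]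
        linarith
      have hyfin : |y t| < ε := by
        have : (3*y0) * β^m ≤ M * β^m := by nlinarith [pow_pos hβ0 m]
        linarith
      rw [Prod.dist_eq, max_lt_iff]
      constructor
      · simpa [Real.dist_eq] using hxfin
      · simpa [Real.dist_eq] using hyfin
end
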